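/- arXiv:math/0201140 — 4 statements merged into one kernel-verified Lean document; each statement's English description precedes it below -/
import Mathlib

section
/- Let n ≥ 2 and let σ = σ_1σ_2⋯σ_n ∈ D_n, and let σ̂ := (-σ_1)σ_2⋯σ_n ∈ B_n \ D_n. Then σ and σ̂ have the same number of D-descents, d(σ̂) = d(σ), and moreover: σ is of type '1' if and only if σ̂ is of type '0,≥2'; σ is of type '0,1' if and only if σ̂ is of type '0,1'; σ is of type '≥2' if and only if σ̂ is of type '≥2'; and σ is of type '0,≥2' if and only if σ̂ is of type '1'. -/
/-!
Negating `π_1` turns the comparison `π_1 < π_0 = -π_2` into `π_2 < π_1` and vice versa, while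
all other comparisons are untouched. Hence the `D`-descent set of `σ̂` is that of `σ` with `0` and
`1` exchanged, which gives both the equality of descent numbers and the correspondence of types.
Changing a single sign changes the parity of the number of negative letters, so `σ̂ ∉ D_n`.
-/

/-- A signed permutation of `{1,…,n}`, encoded as an (unsigned) permutation of
`Fin n` together with a choice of sign for each position.  The associated
word is `π_1 π_2 ⋯ π_n` where `π_j = ± σ(j)`. -/
abbrev SignedPerm (n : ℕ) := Equiv.Perm (Fin n) × (Fin n → Bool)

namespace SignedPerm

/-- The letter `π_j` of the word of `p`, for `1 ≤ j ≤ n` (and `0` otherwise). -/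
def word {n : ℕ} (p : SignedPerm n) (j : ℕ) : ℤ :=
  if h : 1 ≤ j ∧ j ≤ n then
    (if p.2 ⟨j - 1, by omega⟩ then -1 else 1) * ((p.1 ⟨j - 1, by omega⟩ : ℕ) + 1)
  else 0

/-- The letter `π_j`, with the type `D` convention `π_0 = -π_2`. -/
def entry {n : ℕ} (p : SignedPerm n) (j : ℕ) : ℤ :=
  if j = 0 then -(p.word 2) else p.word j

/-- The set of `D`-descents of `p`: those `i ∈ {0,…,n-1}` with `π_i > π_{i+1}`. -/
def ddes {n : ℕ} (p : SignedPerm n) : Finset ℕ :=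
  (Finset.range n).filter fun i => p.entry (i + 1) < p.entry i

/-- The number of `D`-descents of `p`. -/
def d {n : ℕ} (p : SignedPerm n) : ℕ := p.ddes.card

/-- Membership in the type `D` Coxeter group `D_n ⊆ B_n`:
the number of negative letters is even. -/
def inD {n : ℕ} (p : SignedPerm n) : Prop :=
  Even (Finset.univ.filter (fun i => p.2 i = true)).card

/-- Type '1': descent at position `1` but not at `0`. -/
def type1 {n : ℕ} (p : SignedPerm n) : Prop := 1 ∈ p.ddes ∧ 0 ∉ p.ddes

/-- Type '0,1': descents at both positions `0` and `1`. -/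
def type01 {n : ℕ} (p : SignedPerm n) : Prop := 0 ∈ p.ddes ∧ 1 ∈ p.ddes

/-- Type '≥2': no descent at positions `0` and `1`. -/
def typeGe2 {n : ℕ} (p : SignedPerm n) : Prop := 0 ∉ p.ddes ∧ 1 ∉ p.ddes

/-- Type '0,≥2': descent at position `0` but not at `1`. -/
def type0Ge2 {n : ℕ} (p : SignedPerm n) : Prop := 0 ∈ p.ddes ∧ 1 ∉ p.ddes

instance {n : ℕ} (p : SignedPerm n) : Decidable p.inD := by
  unfold SignedPerm.inD; infer_instance
instance {n : ℕ} (p : SignedPerm n) : Decidable p.type1 := by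
  unfold SignedPerm.type1; infer_instance
instance {n : ℕ} (p : SignedPerm n) : Decidable p.type01 := by
  unfold SignedPerm.type01; infer_instance
instance {n : ℕ} (p : SignedPerm n) : Decidable p.typeGe2 := by
  unfold SignedPerm.typeGe2; infer_instance
instance {n : ℕ} (p : SignedPerm n) : Decidable p.type0Ge2 := by
  unfold SignedPerm.type0Ge2; infer_instance

end SignedPerm

/-- The type `D` Eulerian number `D_{n,k}`: the number of elements of `D_n`
with exactly `k` `D`-descents (zero for `k < 0`). -/
def eulerD (n : ℕ) (k : ℤ) : ℕ :=
  (Finset.univ.filter fun p : SignedPerm n => p.inD ∧ (p.d : ℤ) = k).card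

/-- The sub-Eulerian number `D_{n,k}^1`. -/
def subEuler1 (n : ℕ) (k : ℤ) : ℕ :=
  (Finset.univ.filter fun p : SignedPerm n => p.inD ∧ p.type1 ∧ (p.d : ℤ) = k).card

/-- The sub-Eulerian number `D_{n,k}^{0,1}`. -/
def subEuler01 (n : ℕ) (k : ℤ) : ℕ :=
  (Finset.univ.filter fun p : SignedPerm n => p.inD ∧ p.type01 ∧ (p.d : ℤ) = k).card

/-- The sub-Eulerian number `D_{n,k}^{≥2}`. -/
def subEulerGe2 (n : ℕ) (k : ℤ) : ℕ :=
  (Finset.univ.filter fun p : SignedPerm n => p.inD ∧ p.typeGe2 ∧ (p.d : ℤ) = k).card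

/-- The sub-Eulerian number `D_{n,k}^{0,≥2}`. -/
def subEuler0Ge2 (n : ℕ) (k : ℤ) : ℕ :=
  (Finset.univ.filter fun p : SignedPerm n => p.inD ∧ p.type0Ge2 ∧ (p.d : ℤ) = k).card

/-- The type `D` Eulerian polynomial `D_n(t) = Σ_{π ∈ D_n} t^{d(π)}`
(with `D_0(t) = D_1(t) = 1`). -/
noncomputable def polyD (n : ℕ) : Polynomial ℚ :=
  ∑ p ∈ Finset.univ.filter (fun p : SignedPerm n => p.inD), Polynomial.X ^ p.d

/-- The sub-Eulerian polynomial `D_n^1(t)`. -/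
noncomputable def polyD1 (n : ℕ) : Polynomial ℚ :=
  ∑ p ∈ Finset.univ.filter (fun p : SignedPerm n => p.inD ∧ p.type1), Polynomial.X ^ p.d

/-- The sub-Eulerian polynomial `D_n^{0,1}(t)`. -/
noncomputable def polyD01 (n : ℕ) : Polynomial ℚ :=
  ∑ p ∈ Finset.univ.filter (fun p : SignedPerm n => p.inD ∧ p.type01), Polynomial.X ^ p.d

/-- The sub-Eulerian polynomial `D_n^{≥2}(t)`. -/
noncomputable def polyDGe2 (n : ℕ) : Polynomial ℚ :=
  ∑ p ∈ Finset.univ.filter (fun p : SignedPerm n => p.inD ∧ p.typeGe2), Polynomial.X ^ p.d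

/-- The sub-Eulerian polynomial `D_n^{0,≥2}(t)`. -/
noncomputable def polyD0Ge2 (n : ℕ) : Polynomial ℚ :=
  ∑ p ∈ Finset.univ.filter (fun p : SignedPerm n => p.inD ∧ p.type0Ge2), Polynomial.X ^ p.d

namespace SignedPerm
/-- `σ̂`: the signed permutation obtained from `σ` by negating the first letter. -/
def hat {n : ℕ} (p : SignedPerm n) : SignedPerm n :=
  (p.1, fun i => if (i : ℕ) = 0 then !(p.2 i) else p.2 i)
end SignedPerm

theorem Finset.even_card_iff_not_of_erase_eq {α : Type*} [DecidableEq α] {s t : Finset α}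
    {a : α} (hst : s.erase a = t.erase a) (ha : a ∈ s ↔ a ∉ t) :
    Even s.card ↔ ¬ Even t.card := by
  by_cases hta : a ∈ t
  · have hs : s = t.erase a := by rw [← hst, Finset.erase_eq_of_notMem (by tauto)]
    rw [hs, ← Finset.card_erase_add_one hta, Nat.even_add_one, not_not]
  · have hs : s.erase a = t := by rw [hst, Finset.erase_eq_of_notMem hta]
    rw [← hs, ← Finset.card_erase_add_one (ha.mpr hta), Nat.even_add_one]

namespace SignedPerm

variable {n : ℕ} (σ : SignedPerm n)

theorem word_hat_of_ne_one {j : ℕ} (hj : j ≠ 1) : σ.hat.word j = σ.word j := by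
  unfold word hat
  split
  · simp [show j - 1 ≠ 0 by omega]
  · rfl

theorem word_hat_one : σ.hat.word 1 = -σ.word 1 := by
  unfold word hat
  split_ifs <;> simp_all

theorem entry_hat_of_ne_one {j : ℕ} (hj : j ≠ 1) : σ.hat.entry j = σ.entry j := by
  simp only [entry, word_hat_of_ne_one σ hj, word_hat_of_ne_one σ (show 2 ≠ 1 by decide)]

theorem entry_hat_one : σ.hat.entry 1 = -σ.entry 1 := by
  simp only [entry, one_ne_zero, if_false, word_hat_one]

theorem mem_ddes {i : ℕ} : i ∈ σ.ddes ↔ i < n ∧ σ.entry (i + 1) < σ.entry i := by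
  simp only [ddes, Finset.mem_filter, Finset.mem_range]

theorem entry_zero : σ.entry 0 = -σ.entry 2 := rfl

theorem mem_ddes_hat (hn : 2 ≤ n) (i : ℕ) : i ∈ σ.hat.ddes ↔ Equiv.swap 0 1 i ∈ σ.ddes := by
  rcases lt_trichotomy i 1 with hi | rfl | hi
  · obtain rfl : i = 0 := by omega
    simp only [Equiv.swap_apply_left, mem_ddes, zero_add, Nat.reduceAdd, entry_zero,
      entry_hat_one, entry_hat_of_ne_one σ (show 2 ≠ 1 by decide)]
    omega
  · simp only [Equiv.swap_apply_right, mem_ddes, zero_add, Nat.reduceAdd, entry_zero,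
      entry_hat_one, entry_hat_of_ne_one σ (show 2 ≠ 1 by decide)]
    omega
  · rw [Equiv.swap_apply_of_ne_of_ne (by omega) (by omega), mem_ddes, mem_ddes,
      entry_hat_of_ne_one σ (by omega), entry_hat_of_ne_one σ (by omega)]

theorem ddes_hat (hn : 2 ≤ n) : σ.hat.ddes = σ.ddes.map (Equiv.swap 0 1).toEmbedding := by
  ext i
  rw [mem_ddes_hat σ hn, Finset.mem_map_equiv, Equiv.symm_swap]

theorem zero_mem_ddes_hat_iff (hn : 2 ≤ n) : 0 ∈ σ.hat.ddes ↔ 1 ∈ σ.ddes := by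
  rw [mem_ddes_hat σ hn, Equiv.swap_apply_left]

theorem one_mem_ddes_hat_iff (hn : 2 ≤ n) : 1 ∈ σ.hat.ddes ↔ 0 ∈ σ.ddes := by
  rw [mem_ddes_hat σ hn, Equiv.swap_apply_right]

theorem d_hat (hn : 2 ≤ n) : σ.hat.d = σ.d := by
  rw [d, d, ddes_hat σ hn, Finset.card_map]

theorem inD_hat_iff_not (hn : 0 < n) : σ.hat.inD ↔ ¬ σ.inD := by
  let i₀ : Fin n := ⟨0, hn⟩
  apply Finset.even_card_iff_not_of_erase_eq (a := i₀)
  · ext i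
    by_cases hi : (i : ℕ) = 0
    · simp [i₀, Fin.ext_iff, hi]
    · simp [hat, i₀, Fin.ext_iff, hi]
  · simp [hat, i₀]

end SignedPerm

/-- **Lemma 3.1.** For `σ ∈ D_n` (`n ≥ 2`), the element `σ̂` obtained by negating the
first letter lies in `B_n \ D_n`, has the same number of `D`-descents as `σ`, and
the leading descent types correspond as: `1 ↔ 0,≥2`, `0,1 ↔ 0,1`, `≥2 ↔ ≥2`,
`0,≥2 ↔ 1`. -/
theorem hat_descent_types (n : ℕ) (hn : 2 ≤ n) (σ : SignedPerm n) (hσ : σ.inD) :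
    ¬ (SignedPerm.hat σ).inD ∧
    (SignedPerm.hat σ).d = σ.d ∧
    (σ.type1 ↔ (SignedPerm.hat σ).type0Ge2) ∧
    (σ.type01 ↔ (SignedPerm.hat σ).type01) ∧
    (σ.typeGe2 ↔ (SignedPerm.hat σ).typeGe2) ∧
    (σ.type0Ge2 ↔ (SignedPerm.hat σ).type1) := by
  have h₀ := SignedPerm.zero_mem_ddes_hat_iff σ hn
  have h₁ := SignedPerm.one_mem_ddes_hat_iff σ hn
  refine ⟨fun h ↦ (SignedPerm.inD_hat_iff_not σ (by omega)).mp h hσ, SignedPerm.d_hat σ hn,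
    ?_, ?_, ?_, ?_⟩ <;>
    simp only [SignedPerm.type1, SignedPerm.type01, SignedPerm.typeGe2, SignedPerm.type0Ge2,
      h₀, h₁] <;> tauto
end

section
/- For every n ≥ 3 and every integer k ≥ 0 (with the convention D_{m,j}^* = 0 for j < 0): D_{n,k}^{≥2} = (2k+1)·D_{n-1,k}^{≥2} + 2(n-k-1)·D_{n-1,k-1}^{≥2} + D_{n-1,k}^1 + D_{n-1,k+1}^{0,1} + D_{n-1,k}^{0,≥2}. -/
/-! Every signed permutation of `{1,…,m+1}` arises in exactly one way from a signed permutation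
`σ` of `{1,…,m}` by inserting the letter `±(m+1)` into one of the `m + 1` slots, provided that
inserting `-(m+1)` also negates the letter `±1`; this keeps the parity of the number of negative
letters and changes no comparison, so `D_{m+1}` is built from `D_m`. Inserting at slot `0`, or
`-(m+1)` at slot `1`, creates a descent at `0` or `1`. Inserting `+(m+1)` at slot `1` yields
type '≥2' and replaces the descents of `σ` at `0` and `1` by one at `2`. Inserting at a slot
`j ≥ 2` keeps the type of `σ`, and keeps `d(σ)` exactly when `j` is a descent of `σ` or
`+(m+1)` goes last, raising it by one otherwise. For `σ` of type '≥2' with `d` descents this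
gives `2d + 1` insertions with `d` descents and `2(m - 1 - d)` with `d + 1`.
-/

namespace Finset

lemma card_erase_add_ite {α : Type*} [DecidableEq α] (s : Finset α) (a : α) :
    #(s.erase a) + (if a ∈ s then 1 else 0) = #s := by
  split_ifs with h
  · exact card_erase_add_one h
  · rw [erase_eq_of_notMem h, add_zero]

/-- `T` is the descent set of a word obtained from a word with descent set `D` by inserting a
letter after position `j`; `a` and `b` say whether the new letter creates descents at `j` and
`j + 1`. -/
lemma card_add_ite_of_mem_iff {T D : Finset ℕ} {j : ℕ} {a b : Prop} [Decidable a] [Decidable b]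
    (hT : ∀ x, x ∈ T ↔ (x < j ∧ x ∈ D) ∨ (x = j ∧ a) ∨ (x = j + 1 ∧ b) ∨
      (j + 2 ≤ x ∧ x - 1 ∈ D)) :
    #T + (if j ∈ D then 1 else 0) = #D + (if a then 1 else 0) + (if b then 1 else 0) := by
  set skip : ℕ → ℕ := fun y => if y < j then y else y + 1
  have h_inj : Function.Injective skip := fun y z h => by
    simp only [skip] at h
    split_ifs at h <;> omega
  have h_img : ∀ x,
      x ∈ (D.erase j).image skip ↔ (x < j ∧ x ∈ D) ∨ (j + 2 ≤ x ∧ x - 1 ∈ D) := by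
    intro x
    simp only [mem_image, mem_erase, skip]
    constructor
    · rintro ⟨y, ⟨hyj, hy⟩, rfl⟩
      split_ifs with h
      · exact .inl ⟨h, hy⟩
      · exact .inr ⟨by omega, by simpa using hy⟩
    · rintro (⟨hx, hxD⟩ | ⟨hx, hxD⟩)
      · exact ⟨x, ⟨by omega, hxD⟩, if_pos hx⟩
      · exact ⟨x - 1, ⟨by omega, hxD⟩, by rw [if_neg (by omega)]; omega⟩
  set S : Finset ℕ := (if a then {j} else ∅) ∪ (if b then {j + 1} else ∅)
  have h_S : ∀ x, x ∈ S ↔ (x = j ∧ a) ∨ (x = j + 1 ∧ b) := fun x => by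
    simp only [S, mem_union]
    split_ifs <;> simp [*]
  have h_eq : T = S ∪ (D.erase j).image skip := by
    ext x
    rw [hT, mem_union, h_img, h_S]
    tauto
  have h_disj : Disjoint S ((D.erase j).image skip) := disjoint_left.2 fun x hxS hx => by
    rw [h_S] at hxS
    rw [h_img] at hx
    omega
  have h_card_S : #S = (if a then 1 else 0) + (if b then 1 else 0) := by
    rw [card_union_of_disjoint (disjoint_left.2 fun x => by split_ifs <;> simp +contextual)]
    split_ifs <;> simp
  rw [h_eq, card_union_of_disjoint h_disj, card_image_of_injective _ h_inj, h_card_S,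
    ← card_erase_add_ite D j]
  ring

lemma card_filter_eq_of_eq_ite {α : Type*} [DecidableEq α] {A E : Finset α} (hEA : E ⊆ A)
    {f : α → ℤ} {d : ℤ} (hf : ∀ y ∈ A, f y = if y ∈ E then d else d + 1) (k : ℤ) :
    #{y ∈ A | f y = k} = (if d = k then #E else 0) + (if d + 1 = k then #A - #E else 0) := by
  by_cases h_same : d = k
  · subst h_same
    have : {y ∈ A | f y = d} = E := by
      ext y
      refine ⟨fun hy => ?_,
        fun hy => mem_filter.2 ⟨hEA hy, by rw [hf y (hEA hy), if_pos hy]⟩⟩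
      obtain ⟨hyA, hfy⟩ := mem_filter.1 hy
      by_contra hyE
      rw [hf y hyA, if_neg hyE] at hfy
      omega
    simp [this]
  by_cases h_succ : d + 1 = k
  · subst h_succ
    have : {y ∈ A | f y = d + 1} = A \ E := by
      ext y
      simp only [mem_filter, mem_sdiff]
      refine ⟨fun ⟨hyA, hfy⟩ => ⟨hyA, fun hyE => ?_⟩,
        fun ⟨hyA, hyE⟩ => ⟨hyA, ?_⟩⟩
      · rw [hf y hyA, if_pos hyE] at hfy; omega
      · rw [hf y hyA, if_neg hyE]
    simp [this, card_sdiff_of_subset hEA]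
  · rw [if_neg h_same, if_neg h_succ, card_eq_zero, filter_eq_empty_iff]
    intro y hy
    rw [hf y hy]
    split_ifs <;> omega

lemma card_filter_val_mem_or_eq {n : ℕ} {T : Finset ℕ} (hT : T ⊆ range n) {c : ℕ}
    (hc : c < n) (hcT : c ∉ T) :
    #{y : Fin n × Bool | (y.1 : ℕ) ∈ T ∨ ((y.1 : ℕ) = c ∧ y.2 = false)} =
      2 * #T + 1 := by
  have h_fin : #{j : Fin n | (j : ℕ) ∈ T} = #T :=
    card_bij (fun j _ => (j : ℕ)) (fun j hj => (mem_filter.1 hj).2) (fun _ _ _ _ => Fin.ext)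
      fun x hx => ⟨⟨x, mem_range.1 (hT hx)⟩, by simpa using hx, rfl⟩
  set P : Finset (Fin n × Bool) := (univ.filter fun j : Fin n => (j : ℕ) ∈ T) ×ˢ univ
  have h_disj : Disjoint P {(⟨c, hc⟩, false)} := by
    simp [P, hcT]
  have h_eq : ({y | (y.1 : ℕ) ∈ T ∨ ((y.1 : ℕ) = c ∧ y.2 = false)} : Finset (Fin n × Bool)) =
      P ∪ {(⟨c, hc⟩, false)} := by
    ext ⟨j, ε⟩
    simp [P, Fin.ext_iff, or_comm]
  rw [h_eq, card_union_of_disjoint h_disj, card_product, h_fin]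
  simp [mul_comm]

end Finset

namespace SignedPerm

open Finset

variable {m : ℕ}

lemma word_succ (p : SignedPerm m) (g : Fin m) :
    p.word (g + 1) = (if p.2 g then -1 else 1) * ((p.1 g : ℕ) + 1) := by
  simp [word, g.isLt]

lemma natAbs_word (p : SignedPerm m) {i : ℕ} (h1 : 1 ≤ i) (h2 : i ≤ m) :
    (p.word i).natAbs = (p.1 ⟨i - 1, by omega⟩ : ℕ) + 1 := by
  obtain ⟨g, rfl⟩ : ∃ g : Fin m, i = g + 1 := ⟨⟨i - 1, by omega⟩, by simp; omega⟩
  rw [word_succ]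
  cases p.2 g <;> simp <;> omega

lemma one_le_natAbs_word (p : SignedPerm m) {i : ℕ} (h1 : 1 ≤ i) (h2 : i ≤ m) :
    1 ≤ (p.word i).natAbs := by
  rw [natAbs_word p h1 h2]
  omega

lemma natAbs_word_le (p : SignedPerm m) (i : ℕ) : (p.word i).natAbs ≤ m := by
  by_cases h : 1 ≤ i ∧ i ≤ m
  · have := (p.1 ⟨i - 1, by omega⟩).isLt
    rw [natAbs_word p h.1 h.2]
    omega
  · simp [word, h]

lemma eq_of_natAbs_word_eq (p : SignedPerm m) {i i' : ℕ} (h1 : 1 ≤ i) (h2 : i ≤ m)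
    (h1' : 1 ≤ i') (h2' : i' ≤ m) (h : (p.word i).natAbs = (p.word i').natAbs) : i = i' := by
  rw [natAbs_word p h1 h2, natAbs_word p h1' h2', add_left_inj, Fin.val_inj,
    p.1.injective.eq_iff, Fin.mk.injEq] at h
  omega

lemma mem_ddes_iff (p : SignedPerm m) {x : ℕ} (hx : 1 ≤ x) :
    x ∈ p.ddes ↔ x < m ∧ p.word (x + 1) < p.word x := by
  simp [ddes, entry, show x ≠ 0 by omega]

lemma zero_mem_ddes_iff (p : SignedPerm m) : 0 ∈ p.ddes ↔ 0 < m ∧ p.word 1 < -p.word 2 := by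
  simp [ddes, entry]

lemma lt_of_mem_ddes {p : SignedPerm m} {x : ℕ} (h : x ∈ p.ddes) : x < m :=
  mem_range.1 (mem_filter.1 h).1

lemma ddes_subset_Ico_of_typeGe2 {p : SignedPerm m} (h : p.typeGe2) : p.ddes ⊆ Ico 2 m :=
  fun x hx => by
    have := lt_of_mem_ddes hx
    have : x ≠ 0 := by rintro rfl; exact h.1 hx
    have : x ≠ 1 := by rintro rfl; exact h.2 hx
    simp only [mem_Ico]; omega

lemma d_le_of_typeGe2 {p : SignedPerm m} (h : p.typeGe2) : p.d ≤ m - 2 :=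
  (card_le_card (ddes_subset_Ico_of_typeGe2 h)).trans_eq (Nat.card_Ico 2 m)

def negateOne (σ : SignedPerm m) : SignedPerm m :=
  (σ.1, fun i => if (σ.1 i : ℕ) = 0 then !σ.2 i else σ.2 i)

lemma negateOne_involutive : Function.Involutive (negateOne (m := m)) := fun σ =>
  Prod.ext rfl <| funext fun i => by by_cases h : (σ.1 i : ℕ) = 0 <;> simp [negateOne, h]

lemma word_negateOne (σ : SignedPerm m) (i : ℕ) :
    (negateOne σ).word i = σ.word i ∨
      ((σ.word i).natAbs = 1 ∧ (negateOne σ).word i = -σ.word i) := by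
  by_cases hi : 1 ≤ i ∧ i ≤ m
  · obtain ⟨g, rfl⟩ : ∃ g : Fin m, i = g + 1 := ⟨⟨i - 1, by omega⟩, by simp; omega⟩
    simp only [word_succ]
    by_cases h0 : (σ.1 g : ℕ) = 0 <;> cases h : σ.2 g <;> simp [negateOne, h0, h]
  · simp [word, hi]

/-- The letter `±1` has the smallest absolute value, so negating it changes no comparison
between two letters, nor between `π_1` and `π_0 = -π_2`. -/
lemma ddes_negateOne (hm : 2 ≤ m) (σ : SignedPerm m) : (negateOne σ).ddes = σ.ddes := by
  ext x
  rcases Nat.eq_zero_or_pos x with rfl | hx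
  · rw [zero_mem_ddes_iff, zero_mem_ddes_iff]
    have := one_le_natAbs_word σ (i := 1) le_rfl (by omega)
    have := one_le_natAbs_word σ (i := 2) (by omega) hm
    have := eq_of_natAbs_word_eq σ (i := 1) (i' := 2) le_rfl (by omega) (by omega) hm
    have := word_negateOne σ 1
    have := word_negateOne σ 2
    omega
  · rw [mem_ddes_iff _ hx, mem_ddes_iff _ hx]
    refine and_congr_right fun hxm => ?_
    have := one_le_natAbs_word σ (i := x) hx (by omega)
    have := one_le_natAbs_word σ (i := x + 1) (by omega) hxm
    have := eq_of_natAbs_word_eq σ (i := x) (i' := x + 1) hx (by omega) (by omega) hxm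
    have := word_negateOne σ x
    have := word_negateOne σ (x + 1)
    omega

lemma inD_negateOne (hm : 1 ≤ m) (σ : SignedPerm m) : (negateOne σ).inD ↔ ¬σ.inD := by
  set a := σ.1.symm ⟨0, hm⟩
  have h_ne : ∀ i ∈ ({a}ᶜ : Finset _), (negateOne σ).2 i = σ.2 i := fun i hi => by
    have : σ.1 i ≠ ⟨0, hm⟩ := fun h => by simp [a, ← h] at hi
    simp [negateOne, Fin.ext_iff.not.mp this]
  have h_a : (negateOne σ).2 a = !σ.2 a := by simp [negateOne, a]
  unfold inD
  rw [card_filter, card_filter, Fintype.sum_eq_add_sum_compl a,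
    Fintype.sum_eq_add_sum_compl a (fun i => if σ.2 i = true then 1 else 0),
    sum_congr rfl fun i hi => by rw [h_ne i hi], h_a]
  cases σ.2 a <;> simp [add_comm 1, Nat.even_add_one]

section InsertMax

/-- Inserts the letter `±(m+1)`, negative iff `ε`, at position `j + 1` (slot `j`). -/
def insertMax (σ : SignedPerm m) (j : Fin (m + 1)) (ε : Bool) : SignedPerm (m + 1) :=
  ((finSuccEquiv' j).trans ((Equiv.optionCongr σ.1).trans (finSuccEquiv' (Fin.last m)).symm),
    Fin.insertNth j ε σ.2)

variable (σ : SignedPerm m) (j : Fin (m + 1)) (ε : Bool)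

lemma insertMax_fst_self : (insertMax σ j ε).1 j = Fin.last m := by
  simp [insertMax]

lemma insertMax_fst_succAbove (g : Fin m) :
    (insertMax σ j ε).1 (j.succAbove g) = (σ.1 g).castSucc := by
  simp [insertMax]

lemma insertMax_snd_self : (insertMax σ j ε).2 j = ε := by
  simp [insertMax]

lemma insertMax_snd_succAbove (g : Fin m) : (insertMax σ j ε).2 (j.succAbove g) = σ.2 g := by
  simp [insertMax]

lemma word_insertMax_self :
    (insertMax σ j ε).word (j + 1) = (if ε then -1 else 1) * ((m : ℤ) + 1) := by
  rw [word_succ, insertMax_fst_self, insertMax_snd_self]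
  simp

lemma word_insertMax_succAbove (g : Fin m) :
    (insertMax σ j ε).word (j.succAbove g + 1) = σ.word (g + 1) := by
  rw [word_succ, word_succ, insertMax_fst_succAbove, insertMax_snd_succAbove]
  simp

lemma word_insertMax_of_le {i : ℕ} (h1 : 1 ≤ i) (h2 : i ≤ j) :
    (insertMax σ j ε).word i = σ.word i := by
  have hg : (j.succAbove ⟨i - 1, by omega⟩ : ℕ) = i - 1 := by
    rw [Fin.succAbove_of_castSucc_lt _ _ (by simp [Fin.lt_def]; omega)]
    simp
  have := word_insertMax_succAbove σ j ε ⟨i - 1, by omega⟩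
  rwa [hg, Nat.sub_add_cancel h1] at this

lemma word_insertMax_of_ge {i : ℕ} (h : j + 2 ≤ i) :
    (insertMax σ j ε).word i = σ.word (i - 1) := by
  by_cases hi : i ≤ m + 1
  · have hg : (j.succAbove ⟨i - 2, by omega⟩ : ℕ) = i - 1 := by
      rw [Fin.succAbove_of_le_castSucc _ _ (by simp [Fin.le_def]; omega)]
      simp; omega
    have := word_insertMax_succAbove σ j ε ⟨i - 2, by omega⟩
    rwa [hg, Nat.sub_add_cancel (by omega), show i - 2 + 1 = i - 1 by omega] at this
  · simp [word, show ¬i ≤ m + 1 from hi, show ¬i - 1 ≤ m by omega]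

lemma mem_ddes_insertMax_of_pos {x : ℕ} (hx : 1 ≤ x) :
    x ∈ (insertMax σ j ε).ddes ↔ (x < j ∧ x ∈ σ.ddes) ∨ (x = j ∧ ε = true) ∨
      (x = j + 1 ∧ ε = false ∧ (j : ℕ) < m) ∨ (j + 2 ≤ x ∧ x - 1 ∈ σ.ddes) := by
  have hj := j.isLt
  rw [mem_ddes_iff _ hx]
  rcases lt_trichotomy x j with hxj | rfl | hxj
  · rw [word_insertMax_of_le σ j ε hx hxj.le,
      word_insertMax_of_le σ j ε (i := x + 1) (by omega) hxj, mem_ddes_iff σ hx]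
    omega
  · rw [word_insertMax_of_le σ _ ε hx le_rfl, word_insertMax_self]
    have := natAbs_word_le σ j
    cases ε <;> simp <;> omega
  rcases (show x = j + 1 ∨ j + 2 ≤ x by omega) with rfl | hxj
  · rw [word_insertMax_self, word_insertMax_of_ge σ j ε le_rfl]
    have := natAbs_word_le σ (j + 1)
    cases ε <;> simp <;> omega
  · rw [word_insertMax_of_ge σ j ε hxj, word_insertMax_of_ge σ j ε (by omega),
      mem_ddes_iff σ (show 1 ≤ x - 1 by omega), Nat.sub_add_cancel (by omega),
      show x + 1 - 1 = x by omega]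
    omega

lemma zero_mem_ddes_insertMax :
    0 ∈ (insertMax σ j ε).ddes ↔ if (j : ℕ) ≤ 1 then ε = true else 0 ∈ σ.ddes := by
  rw [zero_mem_ddes_iff]
  have h1 := natAbs_word_le σ 1
  rcases (show (j : ℕ) = 0 ∨ (j : ℕ) = 1 ∨ 2 ≤ (j : ℕ) by omega) with hj | hj | hj
  · have h_self := word_insertMax_self σ j ε
    rw [hj, zero_add] at h_self
    rw [h_self, word_insertMax_of_ge σ j ε (by omega)]
    cases ε <;> simp [hj] <;> omega
  · have h_self := word_insertMax_self σ j ε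
    rw [hj] at h_self
    rw [h_self, word_insertMax_of_le σ j ε le_rfl hj.ge]
    cases ε <;> simp [hj] <;> omega
  · rw [word_insertMax_of_le σ j ε le_rfl (by omega), word_insertMax_of_le σ j ε (by omega) hj,
      zero_mem_ddes_iff, if_neg (by omega)]
    omega

end InsertMax

def insertMaxD (σ : SignedPerm m) (j : Fin (m + 1)) (ε : Bool) : SignedPerm (m + 1) :=
  insertMax (if ε then negateOne σ else σ) j ε

lemma mem_ddes_insertMaxD_of_pos (hm : 2 ≤ m) (σ : SignedPerm m) (j : Fin (m + 1)) (ε : Bool)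
    {x : ℕ} (hx : 1 ≤ x) :
    x ∈ (insertMaxD σ j ε).ddes ↔ (x < j ∧ x ∈ σ.ddes) ∨ (x = j ∧ ε = true) ∨
      (x = j + 1 ∧ ε = false ∧ (j : ℕ) < m) ∨ (j + 2 ≤ x ∧ x - 1 ∈ σ.ddes) := by
  rw [insertMaxD, mem_ddes_insertMax_of_pos _ _ _ hx]
  cases ε <;> simp [ddes_negateOne hm]

lemma zero_mem_ddes_insertMaxD (hm : 2 ≤ m) (σ : SignedPerm m) (j : Fin (m + 1)) (ε : Bool) :
    0 ∈ (insertMaxD σ j ε).ddes ↔ if (j : ℕ) ≤ 1 then ε = true else 0 ∈ σ.ddes := by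
  rw [insertMaxD, zero_mem_ddes_insertMax]
  cases ε <;> simp [ddes_negateOne hm]

lemma typeGe2_insertMaxD_iff (hm : 2 ≤ m) (σ : SignedPerm m) (j : Fin (m + 1)) (ε : Bool) :
    (insertMaxD σ j ε).typeGe2 ↔
      (2 ≤ (j : ℕ) ∧ σ.typeGe2) ∨ ((j : ℕ) = 1 ∧ ε = false) := by
  rw [typeGe2, zero_mem_ddes_insertMaxD hm, mem_ddes_insertMaxD_of_pos hm _ _ _ le_rfl, typeGe2]
  rcases (show (j : ℕ) = 0 ∨ (j : ℕ) = 1 ∨ 2 ≤ (j : ℕ) by omega) with hj | hj | hj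
  · cases ε <;> simp [hj]; omega
  · cases ε <;> simp [hj]
  · have h1 : 1 < (j : ℕ) := hj
    have h0 : j ≠ 0 := by rintro rfl; simp at hj
    cases ε <;> simp [hj, h0, h1, h1.ne, h1.ne', h1.not_ge]

lemma d_insertMaxD_of_two_le (hm : 2 ≤ m) (σ : SignedPerm m) (j : Fin (m + 1)) (ε : Bool)
    (hj : 2 ≤ (j : ℕ)) :
    (insertMaxD σ j ε).d + (if (j : ℕ) ∈ σ.ddes then 1 else 0) =
      σ.d + (if ε = true then 1 else 0) + (if ε = false ∧ (j : ℕ) < m then 1 else 0) := by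
  refine card_add_ite_of_mem_iff fun x => ?_
  rcases Nat.eq_zero_or_pos x with rfl | hx
  · rw [zero_mem_ddes_insertMaxD hm, if_neg (by omega)]
    simp [show 0 < (j : ℕ) by omega, show (0 : ℕ) ≠ j by omega]
  · exact mem_ddes_insertMaxD_of_pos hm σ j ε hx

lemma d_insertMaxD_of_eq_one (hm : 2 ≤ m) (σ : SignedPerm m) (j : Fin (m + 1))
    (hj : (j : ℕ) = 1) :
    (insertMaxD σ j false).d + (if 0 ∈ σ.ddes then 1 else 0) +
      (if 1 ∈ σ.ddes then 1 else 0) = σ.d + 1 := by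
  have h := card_add_ite_of_mem_iff (T := (insertMaxD σ j false).ddes) (D := σ.ddes.erase 0)
    (j := 1) (a := False) (b := True) fun x => by
      rcases Nat.eq_zero_or_pos x with rfl | hx
      · simp [zero_mem_ddes_insertMaxD hm, hj]
      · rw [mem_ddes_insertMaxD_of_pos hm _ _ _ hx, hj]
        simp only [mem_erase]
        grind
  simp only [mem_erase, ne_eq, one_ne_zero, not_false_eq_true, true_and, if_false, if_true] at h
  rw [d, d, ← card_erase_add_ite σ.ddes 0]
  omega

lemma card_negative_insertMax (σ : SignedPerm m) (j : Fin (m + 1)) (ε : Bool) :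
    #{i | (insertMax σ j ε).2 i = true} = (if ε then 1 else 0) + #{i | σ.2 i = true} := by
  rw [card_filter, card_filter, Fin.sum_univ_succAbove _ j]
  simp [insertMax_snd_self, insertMax_snd_succAbove]

lemma inD_insertMaxD (hm : 1 ≤ m) (σ : SignedPerm m) (j : Fin (m + 1)) (ε : Bool) :
    (insertMaxD σ j ε).inD ↔ σ.inD := by
  have h := inD_negateOne hm σ
  cases ε <;> simp only [inD] at h ⊢ <;>
    simp [insertMaxD, card_negative_insertMax, add_comm 1, Nat.even_add_one, h]

lemma insertMax_inj {σ σ' : SignedPerm m} {j j' : Fin (m + 1)} {ε ε' : Bool}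
    (h : insertMax σ j ε = insertMax σ' j' ε') : σ = σ' ∧ j = j' ∧ ε = ε' := by
  obtain rfl : j = j' := (insertMax σ' j' ε').1.injective <| by
    rw [insertMax_fst_self, ← h, insertMax_fst_self]
  obtain rfl : ε = ε' := by
    simpa [insertMax_snd_self] using congrArg (fun p => p.2 j) h
  refine ⟨Prod.ext (Equiv.ext fun g => ?_) (funext fun g => ?_), rfl, rfl⟩
  · simpa [insertMax_fst_succAbove] using congrArg (fun p => p.1 (j.succAbove g)) h
  · simpa [insertMax_snd_succAbove] using congrArg (fun p => p.2 (j.succAbove g)) h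

lemma insertMaxD_bijective :
    Function.Bijective fun x : SignedPerm m × Fin (m + 1) × Bool =>
      insertMaxD x.1 x.2.1 x.2.2 := by
  refine (Fintype.bijective_iff_injective_and_card _).2 ⟨?_, ?_⟩
  · rintro ⟨σ, j, ε⟩ ⟨σ', j', ε'⟩ h
    obtain ⟨hσ, rfl, rfl⟩ := insertMax_inj h
    have : σ = σ' := by cases ε <;> simpa [negateOne_involutive.injective.eq_iff] using hσ
    rw [this]
  · simp [Fintype.card_perm, Nat.factorial_succ, pow_succ]
    ring

lemma d_insertMaxD_of_typeGe2 (hm : 2 ≤ m) {σ : SignedPerm m} (hσ : σ.typeGe2)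
    {j : Fin (m + 1)} {ε : Bool} (hj : 2 ≤ (j : ℕ) ∨ ((j : ℕ) = 1 ∧ ε = false)) :
    ((insertMaxD σ j ε).d : ℤ) =
      if (j : ℕ) ∈ σ.ddes ∨ ((j : ℕ) = m ∧ ε = false) then (σ.d : ℤ) else σ.d + 1 := by
  have h_ddes := fun x hx => mem_Ico.1 (ddes_subset_Ico_of_typeGe2 hσ (x := x) hx)
  rcases hj with hj | ⟨hj, rfl⟩
  · have h := d_insertMaxD_of_two_le hm σ j ε hj
    by_cases hjD : (j : ℕ) ∈ σ.ddes
    · rw [if_pos (.inl hjD)]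
      cases ε <;> simp [hjD, (h_ddes _ hjD).2] at h <;> omega
    · have := j.isLt
      cases ε
      · by_cases hjm : (j : ℕ) = m
        · simp [hjm, hjm ▸ hjD] at h ⊢; omega
        · simp [hjD, hjm, show (j : ℕ) < m by omega] at h ⊢; omega
      · simp [hjD] at h ⊢; omega
  · have h := d_insertMaxD_of_eq_one hm σ j hj
    simp only [hσ.1, hσ.2, if_false] at h
    rw [if_neg]
    · omega
    · rintro (hjD | ⟨hjm, -⟩)
      · have := h_ddes _ hjD; omega
      · omega

lemma card_insertMaxD_of_typeGe2 (hm : 2 ≤ m) {σ : SignedPerm m} (hσ : σ.typeGe2) (k : ℤ) :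
    #{y : Fin (m + 1) × Bool | (insertMaxD σ y.1 y.2).typeGe2 ∧
        ((insertMaxD σ y.1 y.2).d : ℤ) = k} =
      (if (σ.d : ℤ) = k then 2 * σ.d + 1 else 0) +
        (if (σ.d : ℤ) + 1 = k then 2 * (m - 1 - σ.d) else 0) := by
  have h_ddes := fun x hx => mem_Ico.1 (ddes_subset_Ico_of_typeGe2 hσ (x := x) hx)
  set A : Finset (Fin (m + 1) × Bool) :=
    {y | (y.1 : ℕ) ∈ Ico 2 (m + 1) ∨ ((y.1 : ℕ) = 1 ∧ y.2 = false)}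
  set E : Finset (Fin (m + 1) × Bool) :=
    {y | (y.1 : ℕ) ∈ σ.ddes ∨ ((y.1 : ℕ) = m ∧ y.2 = false)}
  have h_A : ({y | (insertMaxD σ y.1 y.2).typeGe2} : Finset (Fin (m + 1) × Bool)) = A := by
    ext ⟨j, ε⟩
    simp [A, typeGe2_insertMaxD_iff hm, hσ, Nat.le_of_lt_succ j.isLt]
  have h_EA : E ⊆ A := fun y hy => by
    simp only [E, A, mem_filter, mem_univ, true_and, mem_Ico] at hy ⊢
    rcases hy with hy | hy
    · have := h_ddes _ hy; omega
    · omega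
  have h_d : ∀ y ∈ A,
      ((insertMaxD σ y.1 y.2).d : ℤ) = if y ∈ E then (σ.d : ℤ) else σ.d + 1 := by
    rintro ⟨j, ε⟩ hy
    simp only [A, E, mem_filter, mem_univ, true_and, mem_Ico] at hy ⊢
    exact d_insertMaxD_of_typeGe2 hm hσ (hy.imp_left And.left)
  have h_card_A : #A = 2 * (m - 1) + 1 := by
    rw [card_filter_val_mem_or_eq (fun x hx => mem_range.2 (mem_Ico.1 hx).2) (by omega)
      (by simp), Nat.card_Ico]
    omega
  have h_card_E : #E = 2 * σ.d + 1 :=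
    card_filter_val_mem_or_eq (fun x hx => mem_range.2 (by have := h_ddes x hx; omega))
      (by omega) (fun h => by have := h_ddes m h; omega)
  rw [← filter_filter, h_A, card_filter_eq_of_eq_ite h_EA h_d, h_card_A, h_card_E]
  congr 2
  omega

lemma card_insertMaxD_of_not_typeGe2 (hm : 2 ≤ m) {σ : SignedPerm m} (hσ : ¬σ.typeGe2)
    (k : ℤ) :
    #{y : Fin (m + 1) × Bool | (insertMaxD σ y.1 y.2).typeGe2 ∧
        ((insertMaxD σ y.1 y.2).d : ℤ) = k} =
      if ((insertMaxD σ ⟨1, by omega⟩ false).d : ℤ) = k then 1 else 0 := by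
  have h_single : ({y | (insertMaxD σ y.1 y.2).typeGe2} : Finset (Fin (m + 1) × Bool)) =
      {(⟨1, by omega⟩, false)} := by
    ext ⟨j, ε⟩
    simp [typeGe2_insertMaxD_iff hm, hσ, Fin.ext_iff]
  rw [← filter_filter, h_single, filter_singleton]
  split_ifs <;> rfl

lemma card_insertMaxD_eq (hm : 2 ≤ m) (σ : SignedPerm m) (k : ℤ) :
    (#{y : Fin (m + 1) × Bool | (insertMaxD σ y.1 y.2).typeGe2 ∧
        ((insertMaxD σ y.1 y.2).d : ℤ) = k} : ℤ) =
      (if σ.typeGe2 ∧ (σ.d : ℤ) = k then 2 * k + 1 else 0) +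
      (if σ.typeGe2 ∧ (σ.d : ℤ) = k - 1 then 2 * (m - k) else 0) +
      (if σ.type1 ∧ (σ.d : ℤ) = k then 1 else 0) +
      (if σ.type01 ∧ (σ.d : ℤ) = k + 1 then 1 else 0) +
      (if σ.type0Ge2 ∧ (σ.d : ℤ) = k then 1 else 0) := by
  by_cases hσ : σ.typeGe2
  · have := d_le_of_typeGe2 hσ
    rw [card_insertMaxD_of_typeGe2 hm hσ]
    simp only [type1, type01, type0Ge2, hσ.1, hσ.2, hσ, true_and, false_and, and_false, if_false]
    split_ifs <;> push_cast <;> omega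
  · have h_d := d_insertMaxD_of_eq_one hm σ ⟨1, by omega⟩ rfl
    rw [card_insertMaxD_of_not_typeGe2 hm hσ]
    simp only [typeGe2, type1, type01, type0Ge2] at hσ ⊢
    by_cases h0 : 0 ∈ σ.ddes <;> by_cases h1 : 1 ∈ σ.ddes <;> simp [h0, h1] at h_d hσ ⊢ <;>
      split_ifs <;> omega

lemma subEulerGe2_succ (hm : 2 ≤ m) (k : ℤ) :
    (subEulerGe2 (m + 1) k : ℤ) =
      (2 * k + 1) * subEulerGe2 m k + 2 * (m - k) * subEulerGe2 m (k - 1) +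
        subEuler1 m k + subEuler01 m (k + 1) + subEuler0Ge2 m k := by
  have h_fiber : ∀ σ : SignedPerm m,
      (∑ y : Fin (m + 1) × Bool,
        if (insertMaxD σ y.1 y.2).inD ∧ (insertMaxD σ y.1 y.2).typeGe2 ∧
          ((insertMaxD σ y.1 y.2).d : ℤ) = k then (1 : ℤ) else 0) =
      (if σ.inD ∧ σ.typeGe2 ∧ (σ.d : ℤ) = k then 2 * k + 1 else 0) +
      (if σ.inD ∧ σ.typeGe2 ∧ (σ.d : ℤ) = k - 1 then 2 * (m - k) else 0) +
      (if σ.inD ∧ σ.type1 ∧ (σ.d : ℤ) = k then 1 else 0) +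
      (if σ.inD ∧ σ.type01 ∧ (σ.d : ℤ) = k + 1 then 1 else 0) +
      (if σ.inD ∧ σ.type0Ge2 ∧ (σ.d : ℤ) = k then 1 else 0) := fun σ => by
    simp only [inD_insertMaxD (by omega : 1 ≤ m)]
    by_cases hσ : σ.inD
    · simp only [hσ, true_and, ← natCast_card_filter, card_insertMaxD_eq hm]
    · simp [hσ]
  rw [subEulerGe2, natCast_card_filter, ← insertMaxD_bijective.sum_comp, Fintype.sum_prod_type]
  simp only [h_fiber, sum_add_distrib, ← sum_filter, sum_const, nsmul_eq_mul, subEulerGe2,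
    subEuler1, subEuler01, subEuler0Ge2]
  ring

end SignedPerm

theorem subEulerGe2_recurrence_general (n : ℕ) (hn : 3 ≤ n) (k : ℤ) :
    (subEulerGe2 n k : ℤ) =
      (2 * k + 1) * subEulerGe2 (n - 1) k
        + 2 * ((n : ℤ) - k - 1) * subEulerGe2 (n - 1) (k - 1)
        + subEuler1 (n - 1) k + subEuler01 (n - 1) (k + 1) + subEuler0Ge2 (n - 1) k := by
  obtain ⟨m, rfl⟩ : ∃ m, n = m + 1 := ⟨n - 1, by omega⟩
  rw [Nat.add_sub_cancel, SignedPerm.subEulerGe2_succ (by omega)]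
  push_cast
  ring

/-- **Proposition 3.2 (iii).** Recurrence for the sub-Eulerian numbers `D_{n,k}^{≥2}`. -/
theorem subEulerGe2_recurrence (n : ℕ) (hn : 3 ≤ n) (k : ℤ) (hk : 0 ≤ k) :
    (subEulerGe2 n k : ℤ) =
      (2 * k + 1) * subEulerGe2 (n - 1) k
        + 2 * ((n : ℤ) - k - 1) * subEulerGe2 (n - 1) (k - 1)
        + subEuler1 (n - 1) k + subEuler01 (n - 1) (k + 1) + subEuler0Ge2 (n - 1) k :=
  subEulerGe2_recurrence_general n hn k
end

section
/- For every n ≥ 3, the following identity of polynomials in t holds (this is the paper's identity D_n^{≥2}(t) = [2(n-2)t+1]D_{n-1}^{≥2}(t) + 2t(1-t)(D_{n-1}^{≥2})'(t) + D_{n-1}^1(t) + t^{-1}D_{n-1}^{0,1}(t) + D_{n-1}^{0,≥2}(t), cleared of the denominator t, which is legitimate since t divides D_{n-1}^{0,1}(t)): t·D_n^{≥2}(t) = [2(n-2)t + 1]·t·D_{n-1}^{≥2}(t) + 2t²(1-t)·(D_{n-1}^{≥2})'(t) + t·D_{n-1}^1(t) + D_{n-1}^{0,1}(t) + t·D_{n-1}^{0,≥2}(t),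 where ′ denotes the formal derivative of polynomials. -/
namespace DRec

open Polynomial Finset

variable {m : ℕ}

/-- Insert the letter `±(m+1)` at (0-based) position `j` into a signed permutation of `m`. -/
def ins (σ : SignedPerm m) (j : Fin (m+1)) (ε : Bool) : SignedPerm (m+1) :=
  ⟨(finSuccEquiv' j).trans ((Equiv.optionCongr σ.1).trans (finSuccEquiv' (Fin.last m)).symm),
   fun k => (finSuccEquiv' j k).elim ε σ.2⟩

@[simp] lemma ins_fst_self (σ : SignedPerm m) (j : Fin (m+1)) (ε : Bool) :
    (ins σ j ε).1 j = Fin.last m := by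
  simp [ins, finSuccEquiv'_at]

@[simp] lemma ins_fst_succAbove (σ : SignedPerm m) (j : Fin (m+1)) (ε : Bool) (i : Fin m) :
    (ins σ j ε).1 (j.succAbove i) = (σ.1 i).castSucc := by
  simp [ins, finSuccEquiv'_succAbove, finSuccEquiv'_symm_some, Fin.succAbove_last]

@[simp] lemma ins_snd_self (σ : SignedPerm m) (j : Fin (m+1)) (ε : Bool) :
    (ins σ j ε).2 j = ε := by
  simp [ins, finSuccEquiv'_at]

@[simp] lemma ins_snd_succAbove (σ : SignedPerm m) (j : Fin (m+1)) (ε : Bool) (i : Fin m) :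
    (ins σ j ε).2 (j.succAbove i) = σ.2 i := by
  simp [ins, finSuccEquiv'_succAbove]

lemma word_fin {n : ℕ} (p : SignedPerm n) (i : Fin n) :
    p.word (i.val + 1) = (if p.2 i then -1 else 1) * ((p.1 i : ℕ) + 1) := by
  have h : 1 ≤ i.val + 1 ∧ i.val + 1 ≤ n := ⟨Nat.le_add_left _ _, i.isLt⟩
  rw [SignedPerm.word, dif_pos h]
  congr 2 <;> congr 1 <;> exact Fin.ext (by simp)

lemma word_abs_le {n : ℕ} (p : SignedPerm n) (k : ℕ) : |p.word k| ≤ n := by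
  rw [SignedPerm.word]
  split
  · next h =>
    have hb : ((p.1 ⟨k - 1, by omega⟩ : ℕ) : ℤ) + 1 ≤ n := by
      have := (p.1 ⟨k - 1, by omega⟩).isLt
      exact_mod_cast Nat.succ_le_of_lt this
    split <;> rw [abs_mul] <;> simp <;> rw [abs_of_nonneg (by positivity)] <;> exact_mod_cast hb
  · simp

lemma word_ins_lt (σ : SignedPerm m) (j : Fin (m+1)) (ε : Bool) {k : ℕ}
    (h1 : 1 ≤ k) (h2 : k ≤ j.val) : (ins σ j ε).word k = σ.word k := by
  have hjm : j.val ≤ m := Nat.lt_succ_iff.mp j.isLt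
  have hi : k - 1 < m := by omega
  set i : Fin m := ⟨k-1, hi⟩ with hidef
  have hsa : (j.succAbove i).val = k - 1 := by
    rw [Fin.succAbove_of_castSucc_lt]
    · simp [hidef]
    · rw [Fin.lt_def]; exact (show (i:ℕ) < (j:ℕ) by have hiv : (i:ℕ) = k - 1 := rfl; omega)
  have L : (ins σ j ε).word k = (if σ.2 i then -1 else 1) * ((σ.1 i : ℕ) + 1) := by
    rw [show k = (j.succAbove i).val + 1 by omega, word_fin, ins_snd_succAbove,
      ins_fst_succAbove]
    simp
  have R : σ.word k = (if σ.2 i then -1 else 1) * ((σ.1 i : ℕ) + 1) := by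
    rw [show k = i.val + 1 by simp [hidef]; omega, word_fin]
  rw [L, R]

lemma word_ins_gt (σ : SignedPerm m) (j : Fin (m+1)) (ε : Bool) {k : ℕ}
    (h1 : j.val + 2 ≤ k) (h2 : k ≤ m + 1) : (ins σ j ε).word k = σ.word (k-1) := by
  have hi : k - 2 < m := by omega
  set i : Fin m := ⟨k-2, hi⟩ with hidef
  have hsa : (j.succAbove i).val = k - 1 := by
    rw [Fin.succAbove_of_le_castSucc]
    · simp [hidef]; omega
    · rw [Fin.le_def]; exact (show (j:ℕ) ≤ (i:ℕ) by have hiv : (i:ℕ) = k - 2 := rfl; omega)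
  have L : (ins σ j ε).word k = (if σ.2 i then -1 else 1) * ((σ.1 i : ℕ) + 1) := by
    rw [show k = (j.succAbove i).val + 1 by omega, word_fin, ins_snd_succAbove,
      ins_fst_succAbove]
    simp
  have R : σ.word (k-1) = (if σ.2 i then -1 else 1) * ((σ.1 i : ℕ) + 1) := by
    rw [show k - 1 = i.val + 1 by simp [hidef]; omega, word_fin]
  rw [L, R]

lemma word_ins_self (σ : SignedPerm m) (j : Fin (m+1)) (ε : Bool) :
    (ins σ j ε).word (j.val + 1) = (if ε then -1 else 1) * (m + 1) := by
  rw [word_fin (ins σ j ε) j, ins_snd_self, ins_fst_self]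
  simp

lemma entry_pos {n : ℕ} (p : SignedPerm n) {k : ℕ} (h : k ≠ 0) : p.entry k = p.word k :=
  if_neg h

lemma entry_zero {n : ℕ} (p : SignedPerm n) : p.entry 0 = -(p.word 2) := if_pos rfl

lemma word_bnd (σ : SignedPerm m) (k : ℕ) :
    -((m:ℤ)+1) < σ.word k ∧ σ.word k < (m:ℤ)+1 := by
  have h := abs_le.mp (word_abs_le σ k)
  constructor <;> linarith [h.1, h.2]

lemma mem_ddes {n : ℕ} (p : SignedPerm n) (i : ℕ) :
    i ∈ p.ddes ↔ i < n ∧ p.entry (i + 1) < p.entry i := by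
  simp [SignedPerm.ddes, Finset.mem_filter, Finset.mem_range, and_comm]

lemma entry_ins_low (σ : SignedPerm m) (j : Fin (m+1)) (ε : Bool) {k : ℕ}
    (hj : 2 ≤ j.val) (hk : k ≤ j.val) : (ins σ j ε).entry k = σ.entry k := by
  rcases Nat.eq_zero_or_pos k with h|h
  · subst h
    rw [entry_zero, entry_zero, word_ins_lt σ j ε (by omega) (by omega)]
  · rw [entry_pos _ (by omega), entry_pos _ (by omega),
      word_ins_lt σ j ε (by omega) hk]

lemma entry_ins_high (σ : SignedPerm m) (j : Fin (m+1)) (ε : Bool) {k : ℕ}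
    (hk : j.val + 2 ≤ k) (hk2 : k ≤ m + 1) : (ins σ j ε).entry k = σ.entry (k-1) := by
  rw [entry_pos _ (by omega), entry_pos _ (by omega), word_ins_gt σ j ε hk hk2]

lemma entry_ins_self (σ : SignedPerm m) (j : Fin (m+1)) (ε : Bool) :
    (ins σ j ε).entry (j.val + 1) = (if ε then -1 else 1) * (m + 1) := by
  rw [entry_pos _ (by omega), word_ins_self]

lemma mem_low (σ : SignedPerm m) (j : Fin (m+1)) (ε : Bool) {i : ℕ}
    (hj : 2 ≤ j.val) (hi : i + 1 ≤ j.val) :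
    i ∈ (ins σ j ε).ddes ↔ i ∈ σ.ddes := by
  have hjm : j.val ≤ m := Nat.lt_succ_iff.mp j.isLt
  rw [mem_ddes, mem_ddes, entry_ins_low σ j ε hj (by omega),
    entry_ins_low σ j ε hj (by omega)]
  constructor <;> rintro ⟨-, h⟩ <;> exact ⟨by omega, h⟩

lemma mem_self (σ : SignedPerm m) (j : Fin (m+1)) (ε : Bool) (h1 : 1 ≤ j.val) :
    j.val ∈ (ins σ j ε).ddes ↔ ε = true := by
  obtain ⟨hb1, hb2⟩ := word_bnd σ j.val
  rw [mem_ddes, entry_ins_self, entry_pos _ (by omega),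
    word_ins_lt σ j ε (by omega) (by omega)]
  cases ε
  · simp only [Bool.false_eq_true, iff_false, not_and, not_lt, if_false]
    intro _
    linarith
  · simp only [if_true, iff_true]
    exact ⟨by omega, by linarith⟩

lemma mem_succ (σ : SignedPerm m) (j : Fin (m+1)) (ε : Bool) (h1 : j.val + 1 ≤ m) :
    (j.val + 1) ∈ (ins σ j ε).ddes ↔ ε = false := by
  obtain ⟨hb1, hb2⟩ := word_bnd σ (j.val + 1)
  rw [mem_ddes, entry_ins_self,
    entry_ins_high σ j ε (by omega) (by omega)]
  simp only [Nat.add_sub_cancel]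
  rw [entry_pos _ (by omega)]
  cases ε
  · simp only [Bool.false_eq_true, if_false, iff_true]
    exact ⟨by omega, by linarith⟩
  · simp only [Bool.true_eq_false, iff_false, not_and, not_lt, if_true]
    intro _
    linarith

lemma mem_high (σ : SignedPerm m) (j : Fin (m+1)) (ε : Bool) {i : ℕ}
    (hi : j.val + 2 ≤ i) (him : i ≤ m) :
    i ∈ (ins σ j ε).ddes ↔ (i - 1) ∈ σ.ddes := by
  rw [mem_ddes, mem_ddes, entry_ins_high σ j ε (by omega) (by omega),
    entry_ins_high σ j ε (by omega) (by omega)]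
  rw [show i + 1 - 1 = (i - 1) + 1 by omega]
  constructor <;> rintro ⟨-, h⟩ <;> exact ⟨by omega, h⟩

lemma mem_zero_small (σ : SignedPerm m) (j : Fin (m+1)) (ε : Bool)
    (hj : j.val ≤ 1) (hm : 2 ≤ m) :
    0 ∈ (ins σ j ε).ddes ↔ ε = true := by
  obtain ⟨hb1, hb2⟩ := word_bnd σ 1
  rcases Nat.le_one_iff_eq_zero_or_eq_one.mp hj with h | h
  · have e1 : (ins σ j ε).entry 1 = (if ε then -1 else 1) * ((m:ℤ) + 1) := by
      have := word_ins_self σ j ε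
      rw [h] at this
      rw [entry_pos _ one_ne_zero]
      simpa using this
    have e2 : (ins σ j ε).word 2 = σ.word 1 := by
      rw [word_ins_gt σ j ε (by omega) (by omega)]
    rw [mem_ddes, entry_zero, e1, e2]
    cases ε
    · simp only [Bool.false_eq_true, iff_false, not_and, not_lt, if_false]
      intro _
      linarith
    · simp only [if_true, iff_true]
      exact ⟨by omega, by linarith⟩
  · have e1 : (ins σ j ε).entry 1 = σ.word 1 := by
      rw [entry_pos _ one_ne_zero, word_ins_lt σ j ε (by omega) (by omega)]
    have e2 : (ins σ j ε).word 2 = (if ε then -1 else 1) * ((m:ℤ) + 1) := by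
      have := word_ins_self σ j ε
      rw [h] at this
      simpa using this
    rw [mem_ddes, entry_zero, e1, e2]
    cases ε
    · simp only [Bool.false_eq_true, iff_false, not_and, not_lt, if_false]
      intro _
      linarith
    · simp only [if_true, iff_true]
      exact ⟨by omega, by linarith⟩

lemma d_eq_sum {n : ℕ} (p : SignedPerm n) :
    p.d = ∑ i ∈ Finset.range n, if i ∈ p.ddes then 1 else 0 := by
  have hcard : p.ddes.card = ∑ i ∈ Finset.range n,
      if p.entry (i+1) < p.entry i then 1 else 0 := by
    rw [SignedPerm.ddes, Finset.card_filter]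
  rw [SignedPerm.d, hcard]
  refine Finset.sum_congr rfl fun i hi => if_congr ?_ rfl rfl
  rw [mem_ddes, and_iff_right (Finset.mem_range.mp hi)]

/-- The number of descents of `σ` in positions `≥ 2`. -/
def dc (σ : SignedPerm m) : ℕ := ∑ i ∈ Finset.Ico 2 m, if i ∈ σ.ddes then 1 else 0

lemma d_split (hm : 2 ≤ m) (σ : SignedPerm m) :
    σ.d = (if 0 ∈ σ.ddes then 1 else 0) + (if 1 ∈ σ.ddes then 1 else 0) + dc σ := by
  rw [d_eq_sum, Finset.range_eq_Ico, ← Finset.sum_Ico_consecutive _ (Nat.zero_le 2) hm,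
    show Finset.Ico 0 2 = {0, 1} by decide,
    Finset.sum_insert (by decide), Finset.sum_singleton]
  rfl

lemma sum_shift (f : ℕ → ℕ) (a b : ℕ) (h : a ≤ b) :
    ∑ i ∈ Finset.Ico (a+1) (b+1), f i = ∑ i ∈ Finset.Ico a b, f (i+1) := by
  rw [Finset.sum_Ico_eq_sum_range, Finset.sum_Ico_eq_sum_range]
  rw [show b + 1 - (a + 1) = b - a by omega]
  exact Finset.sum_congr rfl fun i _ => by rw [show a + 1 + i = a + i + 1 by omega]

lemma d_ins_middle (σ : SignedPerm m) (j : Fin (m+1)) (ε : Bool)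
    (hj : 2 ≤ j.val) (hjm : j.val + 1 ≤ m) :
    (ins σ j ε).d + (if j.val ∈ σ.ddes then 1 else 0) = σ.d + 1 := by
  set jv := j.val with hjv
  have e1 : ∀ i ∈ Finset.Ico 0 jv,
      (if i ∈ (ins σ j ε).ddes then 1 else 0) = if i ∈ σ.ddes then 1 else 0 := by
    intro i hi
    simp only [mem_low σ j ε (i := i) hj (by have := Finset.mem_Ico.mp hi; omega)]
  have e4 : ∀ i ∈ Finset.Ico (jv+1) m,
      (if (i+1) ∈ (ins σ j ε).ddes then 1 else 0) = if i ∈ σ.ddes then 1 else 0 := by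
    intro i hi
    have hi' := Finset.mem_Ico.mp hi
    simp only [mem_high σ j ε (i := i + 1) (by omega) (by omega), Nat.add_sub_cancel]
  have lhs : (ins σ j ε).d =
      (∑ i ∈ Finset.Ico 0 jv, if i ∈ σ.ddes then 1 else 0) + 1
      + ∑ i ∈ Finset.Ico (jv+1) m, if i ∈ σ.ddes then 1 else 0 := by
    rw [d_eq_sum, Finset.range_eq_Ico,
      ← Finset.sum_Ico_consecutive _ (Nat.zero_le jv) (by omega : jv ≤ m+1),
      ← Finset.sum_Ico_consecutive _ (by omega : jv ≤ jv+2) (by omega : jv+2 ≤ m+1),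
      show Finset.Ico jv (jv+2) = {jv, jv+1} by
        rw [show jv + 2 = (jv+1)+1 by omega, Finset.Ico_add_one_right_eq_Icc]
        ext x
        simp [Finset.mem_Icc]
        omega,
      Finset.sum_insert (by simp), Finset.sum_singleton,
      Finset.sum_congr rfl e1,
      show Finset.Ico (jv+2) (m+1) = Finset.Ico ((jv+1)+1) (m+1) by rfl,
      sum_shift _ (jv+1) m (by omega),
      Finset.sum_congr rfl e4]
    have h2 : (if jv ∈ (ins σ j ε).ddes then 1 else 0)
        + (if jv + 1 ∈ (ins σ j ε).ddes then 1 else 0) = 1 := by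
      simp only [hjv, mem_self σ j ε (by omega), mem_succ σ j ε (by omega)]
      cases ε <;> simp
    omega
  have rhs : σ.d = (∑ i ∈ Finset.Ico 0 jv, if i ∈ σ.ddes then 1 else 0)
      + (if jv ∈ σ.ddes then 1 else 0)
      + ∑ i ∈ Finset.Ico (jv+1) m, if i ∈ σ.ddes then 1 else 0 := by
    rw [d_eq_sum, Finset.range_eq_Ico,
      ← Finset.sum_Ico_consecutive _ (Nat.zero_le jv) (by omega : jv ≤ m),
      ← Finset.sum_Ico_consecutive _ (by omega : jv ≤ jv+1) (by omega : jv+1 ≤ m),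
      Nat.Ico_succ_singleton, Finset.sum_singleton]
    omega
  omega

lemma d_ins_top (σ : SignedPerm m) (j : Fin (m+1)) (ε : Bool)
    (hm : 2 ≤ m) (hj : j.val = m) :
    (ins σ j ε).d = σ.d + (if ε then 1 else 0) := by
  have e1 : ∀ i ∈ Finset.range m,
      (if i ∈ (ins σ j ε).ddes then 1 else 0) = if i ∈ σ.ddes then 1 else 0 := by
    intro i hi
    simp only [mem_low σ j ε (i := i) (by omega) (by have := Finset.mem_range.mp hi; omega)]
  have h2 : (if m ∈ (ins σ j ε).ddes then 1 else 0) = (if ε then 1 else 0) := by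
    have hms := mem_self σ j ε (by omega)
    rw [hj] at hms
    simp only [hms]
  rw [d_eq_sum, Finset.sum_range_succ, Finset.sum_congr rfl e1, ← d_eq_sum, h2]

lemma d_ins_one (σ : SignedPerm m) (j : Fin (m+1))
    (hm : 2 ≤ m) (hj : j.val = 1) :
    (ins σ j false).d = 1 + dc σ := by
  have e4 : ∀ i ∈ Finset.Ico 2 m,
      (if (i+1) ∈ (ins σ j false).ddes then 1 else 0) = if i ∈ σ.ddes then 1 else 0 := by
    intro i hi
    have hi' := Finset.mem_Ico.mp hi
    simp only [mem_high σ j false (i := i + 1) (by omega) (by omega), Nat.add_sub_cancel]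
  rw [d_eq_sum, Finset.range_eq_Ico,
    ← Finset.sum_Ico_consecutive _ (Nat.zero_le 3) (by omega : 3 ≤ m+1),
    show Finset.Ico 0 3 = {0, 1, 2} by decide,
    show Finset.Ico 3 (m+1) = Finset.Ico (2+1) (m+1) by rfl,
    sum_shift _ 2 m (by omega), Finset.sum_congr rfl e4]
  have h0 : (if 0 ∈ (ins σ j false).ddes then 1 else 0) = 0 := by
    simp [mem_zero_small σ j false (by omega) hm]
  have h1 : (if 1 ∈ (ins σ j false).ddes then 1 else 0) = 0 := by
    have hms := mem_self σ j false (by omega)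
    rw [hj] at hms
    simp [hms]
  have h2 : (if 2 ∈ (ins σ j false).ddes then 1 else 0) = 1 := by
    have hms := mem_succ σ j false (by omega)
    rw [hj] at hms
    simp [hms]
  rw [Finset.sum_insert (by decide), Finset.sum_insert (by decide),
    Finset.sum_singleton, h0, h1, h2, dc]
  simp only [Nat.zero_add]

lemma typeGe2_ins_big (σ : SignedPerm m) (j : Fin (m+1)) (ε : Bool) (hj : 2 ≤ j.val) :
    (ins σ j ε).typeGe2 ↔ σ.typeGe2 := by
  rw [SignedPerm.typeGe2, SignedPerm.typeGe2,
    mem_low σ j ε (i := 0) hj (by omega), mem_low σ j ε (i := 1) hj (by omega)]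

lemma typeGe2_ins_one (σ : SignedPerm m) (j : Fin (m+1)) (hm : 2 ≤ m) (hj : j.val = 1) :
    (ins σ j false).typeGe2 := by
  constructor
  · rw [mem_zero_small σ j false (by omega) hm]
    simp
  · have := mem_self σ j false (by omega)
    rw [hj] at this
    rw [this]
    simp

lemma not_typeGe2_ins₁ (σ : SignedPerm m) (j : Fin (m+1)) (hm : 2 ≤ m) (hj : j.val ≤ 1) :
    ¬ (ins σ j true).typeGe2 := by
  intro h
  exact h.1 ((mem_zero_small σ j true hj hm).mpr rfl)

lemma not_typeGe2_ins₂ (σ : SignedPerm m) (j : Fin (m+1)) (hm : 2 ≤ m) (hj : j.val = 0) :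
    ¬ (ins σ j false).typeGe2 := by
  intro h
  have := mem_succ σ j false (by omega)
  rw [hj] at this
  exact h.2 (this.mpr rfl)

lemma inD_ins (σ : SignedPerm m) (j : Fin (m+1)) (ε : Bool) :
    (ins σ j ε).inD ↔ (σ.inD ↔ ε = false) := by
  have hc : (Finset.univ.filter fun i => (ins σ j ε).2 i = true).card
      = (if ε then 1 else 0) + (Finset.univ.filter fun i => σ.2 i = true).card := by
    rw [Finset.card_filter, Finset.card_filter, Fin.sum_univ_succAbove _ j]
    congr 1
    · rw [ins_snd_self]
    · exact Finset.sum_congr rfl fun i _ => by rw [ins_snd_succAbove]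
  rw [SignedPerm.inD, SignedPerm.inD, hc]
  cases ε <;> simp [Nat.even_add, Nat.even_add_one]

lemma ins_symm_last (σ : SignedPerm m) (j : Fin (m+1)) (ε : Bool) :
    ((ins σ j ε).1).symm (Fin.last m) = j :=
  (Equiv.symm_apply_eq _).mpr (ins_fst_self σ j ε).symm

lemma ins_injective :
    Function.Injective (fun x : SignedPerm m × Fin (m+1) × Bool => ins x.1 x.2.1 x.2.2) := by
  rintro ⟨σ, j, ε⟩ ⟨σ', j', ε'⟩ h
  simp only at h
  have hj : j = j' := by
    rw [← ins_symm_last σ j ε, ← ins_symm_last σ' j' ε', h]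
  subst hj
  have h1 : σ.1 = σ'.1 := by
    ext i
    have h3 := congrArg (fun q : SignedPerm (m+1) => q.1 (j.succAbove i)) h
    simp only [ins_fst_succAbove] at h3
    exact congrArg Fin.val (Fin.castSucc_injective _ h3)
  have hε : ε = ε' := by
    have := congrArg (fun q : SignedPerm (m+1) => q.2 j) h
    simpa [ins_snd_self] using this
  have h2 : σ.2 = σ'.2 := by
    funext i
    have := congrArg (fun q : SignedPerm (m+1) => q.2 (j.succAbove i)) h
    simpa [ins_snd_succAbove] using this
  have hσ : σ = σ' := Prod.ext h1 h2
  subst hσ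
  rw [hε]

lemma ins_bijective :
    Function.Bijective (fun x : SignedPerm m × Fin (m+1) × Bool => ins x.1 x.2.1 x.2.2) := by
  rw [Fintype.bijective_iff_injective_and_card]
  refine ⟨ins_injective, ?_⟩
  simp only [Fintype.card_prod, Fintype.card_perm, Fintype.card_fun, Fintype.card_fin,
    Fintype.card_bool, Nat.factorial_succ]
  ring

lemma sum_ins (f : SignedPerm (m+1) → Polynomial ℚ) :
    ∑ π : SignedPerm (m+1), f π
      = ∑ x : SignedPerm m × Fin (m+1) × Bool, f (ins x.1 x.2.1 x.2.2) :=
  (Fintype.sum_bijective _ ins_bijective _ f fun _ => rfl).symm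

/-- Flip the sign of the first letter. -/
def flip (h0 : 0 < m) (σ : SignedPerm m) : SignedPerm m :=
  ⟨σ.1, Function.update σ.2 ⟨0, h0⟩ (!σ.2 ⟨0, h0⟩)⟩

lemma flip_flip (h0 : 0 < m) (σ : SignedPerm m) : flip h0 (flip h0 σ) = σ := by
  refine Prod.ext rfl ?_
  funext i
  rcases eq_or_ne i ⟨0, h0⟩ with h | h
  · subst h
    simp [flip]
  · simp [flip, Function.update_of_ne h]

lemma word_flip_ne (h0 : 0 < m) (σ : SignedPerm m) {k : ℕ} (hk : k ≠ 1) :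
    (flip h0 σ).word k = σ.word k := by
  rw [SignedPerm.word, SignedPerm.word]
  split
  · next h =>
    have hne : (⟨k - 1, by omega⟩ : Fin m) ≠ ⟨0, h0⟩ := by
      simp only [ne_eq, Fin.mk.injEq]
      omega
    rw [show (flip h0 σ).2 ⟨k - 1, by omega⟩ = σ.2 ⟨k - 1, by omega⟩ from
      Function.update_of_ne hne _ _]
    rfl
  · rfl

lemma word_flip_one (h0 : 0 < m) (σ : SignedPerm m) :
    (flip h0 σ).word 1 = -(σ.word 1) := by
  have h1 : (1 : ℕ) = (⟨0, h0⟩ : Fin m).val + 1 := by simp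
  rw [h1, word_fin, word_fin]
  have : (flip h0 σ).2 ⟨0, h0⟩ = !σ.2 ⟨0, h0⟩ := by simp [flip]
  rw [this]
  have : (flip h0 σ).1 = σ.1 := rfl
  rw [this]
  cases σ.2 ⟨0, h0⟩ <;> simp

lemma mem_flip_high (h0 : 0 < m) (σ : SignedPerm m) {i : ℕ} (hi : 2 ≤ i) :
    i ∈ (flip h0 σ).ddes ↔ i ∈ σ.ddes := by
  rw [mem_ddes, mem_ddes, entry_pos _ (by omega), entry_pos _ (by omega),
    entry_pos _ (by omega), entry_pos _ (by omega),
    word_flip_ne h0 σ (by omega), word_flip_ne h0 σ (by omega)]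

lemma mem_flip_zero (h0 : 0 < m) (σ : SignedPerm m) (hm : 2 ≤ m) :
    0 ∈ (flip h0 σ).ddes ↔ 1 ∈ σ.ddes := by
  have e2 : (flip h0 σ).word 2 = σ.word 2 := word_flip_ne h0 σ (by omega)
  have e1 : (flip h0 σ).word 1 = -(σ.word 1) := word_flip_one h0 σ
  rw [mem_ddes, mem_ddes, entry_zero, zero_add,
    entry_pos (flip h0 σ) one_ne_zero, e1, e2,
    entry_pos σ (by omega : (1:ℕ)+1 ≠ 0), entry_pos σ one_ne_zero,
    show (1:ℕ)+1 = 2 from rfl]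
  constructor
  · rintro ⟨-, h⟩
    exact ⟨by omega, by linarith⟩
  · rintro ⟨-, h⟩
    exact ⟨by omega, by linarith⟩

lemma mem_flip_one (h0 : 0 < m) (σ : SignedPerm m) (hm : 2 ≤ m) :
    1 ∈ (flip h0 σ).ddes ↔ 0 ∈ σ.ddes := by
  have e2 : (flip h0 σ).word 2 = σ.word 2 := word_flip_ne h0 σ (by omega)
  have e1 : (flip h0 σ).word 1 = -(σ.word 1) := word_flip_one h0 σ
  rw [mem_ddes, mem_ddes, entry_zero, zero_add,
    entry_pos (flip h0 σ) (by omega : (1:ℕ)+1 ≠ 0),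
    entry_pos (flip h0 σ) one_ne_zero,
    entry_pos σ one_ne_zero, e1,
    show (1:ℕ)+1 = 2 from rfl, e2]
  constructor
  · rintro ⟨-, h⟩
    exact ⟨by omega, by linarith⟩
  · rintro ⟨-, h⟩
    exact ⟨by omega, by linarith⟩

lemma dc_flip (h0 : 0 < m) (σ : SignedPerm m) : dc (flip h0 σ) = dc σ := by
  refine Finset.sum_congr rfl fun i hi => ?_
  have := Finset.mem_Ico.mp hi
  simp only [mem_flip_high h0 σ (i := i) (by omega)]

lemma d_flip (hm : 2 ≤ m) (σ : SignedPerm m) : (flip (by omega) σ).d = σ.d := by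
  rw [d_split hm, d_split hm, dc_flip]
  simp only [mem_flip_zero _ σ hm, mem_flip_one _ σ hm]
  omega

lemma typeGe2_flip (hm : 2 ≤ m) (σ : SignedPerm m) :
    (flip (by omega) σ).typeGe2 ↔ σ.typeGe2 := by
  rw [SignedPerm.typeGe2, SignedPerm.typeGe2, mem_flip_zero _ σ hm, mem_flip_one _ σ hm,
    and_comm]

lemma inD_flip (h0 : 0 < m) (σ : SignedPerm m) : (flip h0 σ).inD ↔ ¬ σ.inD := by
  set z : Fin m := ⟨0, h0⟩ with hz
  have key : ∀ τ : SignedPerm m, (Finset.univ.filter fun i => τ.2 i = true).card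
      = (if τ.2 z = true then 1 else 0)
        + ∑ i ∈ Finset.univ.erase z, (if τ.2 i = true then 1 else 0) := by
    intro τ
    rw [Finset.card_filter, ← Finset.add_sum_erase _ _ (Finset.mem_univ z)]
  have hsum : ∑ i ∈ Finset.univ.erase z, (if (flip h0 σ).2 i = true then 1 else 0)
      = ∑ i ∈ Finset.univ.erase z, (if σ.2 i = true then 1 else 0) := by
    refine Finset.sum_congr rfl fun i hi => ?_
    have hne : i ≠ z := (Finset.mem_erase.mp hi).1
    rw [show (flip h0 σ).2 i = σ.2 i from Function.update_of_ne hne _ _]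
  have hfz : (flip h0 σ).2 z = !σ.2 z := by simp [flip, hz]
  rw [SignedPerm.inD, SignedPerm.inD, key, key, hsum, hfz]
  cases σ.2 z <;> simp [Nat.even_iff, Nat.odd_iff] <;> omega

noncomputable def midP (σ : SignedPerm m) : Polynomial ℚ :=
  ∑ jv ∈ Finset.Ico 2 m, (if jv ∈ σ.ddes then X ^ σ.d else X ^ (σ.d + 1))

noncomputable def SIns (σ : SignedPerm m) (ε : Bool) : Polynomial ℚ :=
  ∑ j : Fin (m+1), if (ins σ j ε).typeGe2 then X ^ (ins σ j ε).d else 0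

noncomputable def g (σ : SignedPerm m) (ε : Bool) (jv : ℕ) : Polynomial ℚ :=
  if jv = 0 then 0
  else if jv = 1 then (if ε = false then X^(1 + dc σ) else 0)
  else if jv = m then (if σ.typeGe2 then X^(σ.d + (if ε then 1 else 0)) else 0)
  else (if σ.typeGe2 then (if jv ∈ σ.ddes then X^(σ.d) else X^(σ.d+1)) else 0)

lemma F_eq_g (hm : 2 ≤ m) (σ : SignedPerm m) (ε : Bool) (j : Fin (m+1)) :
    (if (ins σ j ε).typeGe2 then X ^ (ins σ j ε).d else 0) = g σ ε j.val := by
  have hjm : j.val ≤ m := Nat.lt_succ_iff.mp j.isLt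
  by_cases h0 : j.val = 0
  · rw [g, if_pos h0]
    cases ε
    · rw [if_neg (not_typeGe2_ins₂ σ j hm h0)]
    · rw [if_neg (not_typeGe2_ins₁ σ j hm (by omega))]
  · by_cases h1 : j.val = 1
    · rw [g, if_neg h0, if_pos h1]
      cases ε
      · rw [if_pos (typeGe2_ins_one σ j hm h1), if_pos rfl, d_ins_one σ j hm h1]
      · rw [if_neg (not_typeGe2_ins₁ σ j hm (by omega)), if_neg (by simp)]
    · by_cases h2 : j.val = m
      · rw [g, if_neg h0, if_neg h1, if_pos h2]
        by_cases hT : σ.typeGe2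
        · rw [if_pos ((typeGe2_ins_big σ j ε (by omega)).mpr hT), if_pos hT,
            d_ins_top σ j ε hm h2]
        · rw [if_neg (fun hc => hT ((typeGe2_ins_big σ j ε (by omega)).mp hc)), if_neg hT]
      · rw [g, if_neg h0, if_neg h1, if_neg h2]
        by_cases hT : σ.typeGe2
        · rw [if_pos ((typeGe2_ins_big σ j ε (by omega)).mpr hT), if_pos hT]
          have hd := d_ins_middle σ j ε (by omega) (by omega)
          by_cases hin : j.val ∈ σ.ddes
          · rw [if_pos hin]
            rw [if_pos hin] at hd
            rw [show (ins σ j ε).d = σ.d by omega]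
          · rw [if_neg hin]
            rw [if_neg hin] at hd
            rw [show (ins σ j ε).d = σ.d + 1 by omega]
        · rw [if_neg (fun hc => hT ((typeGe2_ins_big σ j ε (by omega)).mp hc)), if_neg hT]

lemma SIns_eval (hm : 2 ≤ m) (σ : SignedPerm m) (ε : Bool) :
    SIns σ ε = (if ε = false then X^(1 + dc σ) else 0)
      + (if σ.typeGe2 then midP σ else 0)
      + (if σ.typeGe2 then X^(σ.d + (if ε then 1 else 0)) else 0) := by
  have e1 : SIns σ ε = ∑ jv ∈ Finset.range (m+1), g σ ε jv := by
    rw [SIns, Finset.sum_congr rfl (fun j _ => F_eq_g hm σ ε j)]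
    exact Fin.sum_univ_eq_sum_range _ _
  rw [e1, Finset.range_eq_Ico,
    ← Finset.sum_Ico_consecutive _ (Nat.zero_le 2) (by omega : 2 ≤ m+1),
    show Finset.Ico 0 2 = {0, 1} by decide,
    Finset.sum_insert (by decide), Finset.sum_singleton,
    Finset.sum_Ico_succ_top (by omega : 2 ≤ m)]
  have hg0 : g σ ε 0 = 0 := by rw [g, if_pos rfl]
  have hg1 : g σ ε 1 = (if ε = false then X^(1 + dc σ) else 0) := by
    rw [g, if_neg one_ne_zero, if_pos rfl]
  have hgm : g σ ε m = (if σ.typeGe2 then X^(σ.d + (if ε then 1 else 0)) else 0) := by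
    rw [g, if_neg (by omega), if_neg (by omega), if_pos rfl]
  have hmid : ∑ jv ∈ Finset.Ico 2 m, g σ ε jv = (if σ.typeGe2 then midP σ else 0) := by
    have e2 : ∀ jv ∈ Finset.Ico 2 m, g σ ε jv
        = (if σ.typeGe2 then (if jv ∈ σ.ddes then X^(σ.d) else X^(σ.d+1)) else 0) := by
      intro jv hjv
      have := Finset.mem_Ico.mp hjv
      rw [g, if_neg (by omega), if_neg (by omega), if_neg (by omega)]
    rw [Finset.sum_congr rfl e2]
    by_cases hT : σ.typeGe2 <;> simp [hT, midP]
  rw [hg0, hg1, hgm, hmid]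
  ring

lemma ddes_subset (σ : SignedPerm m) (h : σ.typeGe2) : σ.ddes ⊆ Finset.Ico 2 m := by
  intro i hi
  have hlt := ((mem_ddes σ i).mp hi).1
  have hi0 : i ≠ 0 := fun e => h.1 (e ▸ hi)
  have hi1 : i ≠ 1 := fun e => h.2 (e ▸ hi)
  exact Finset.mem_Ico.mpr ⟨by omega, hlt⟩

lemma d_le (hm : 2 ≤ m) (σ : SignedPerm m) (h : σ.typeGe2) : σ.d ≤ m - 2 := by
  have := Finset.card_le_card (ddes_subset σ h)
  simpa [Nat.card_Ico, SignedPerm.d] using this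

lemma midP_eval (hm : 2 ≤ m) (σ : SignedPerm m) (h : σ.typeGe2) :
    midP σ = σ.d • (X : Polynomial ℚ)^σ.d + ((m-2) - σ.d) • X^(σ.d+1) := by
  have h1 : (Finset.Ico 2 m).filter (fun jv => jv ∈ σ.ddes) = σ.ddes := by
    ext i
    simp only [Finset.mem_filter]
    exact ⟨fun hh => hh.2, fun hh => ⟨ddes_subset σ h hh, hh⟩⟩
  rw [midP, Finset.sum_ite, Finset.sum_const, Finset.sum_const, h1]
  have h2 : ((Finset.Ico 2 m).filter (fun jv => ¬ jv ∈ σ.ddes)).card = (m - 2) - σ.d := by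
    rw [Finset.filter_not, Finset.card_sdiff_of_subset (Finset.filter_subset _ _), h1, Nat.card_Ico]
    rfl
  rw [h2, SignedPerm.d]

lemma dc_eq_d (hm : 2 ≤ m) (σ : SignedPerm m) (h : σ.typeGe2) : dc σ = σ.d := by
  have := d_split hm σ
  rw [if_neg h.1, if_neg h.2] at this
  omega

lemma step_A (hm : 2 ≤ m) :
    polyDGe2 (m+1) = ∑ σ : SignedPerm m,
      (if σ.inD then SIns σ false else SIns σ true) := by
  rw [polyDGe2, Finset.sum_filter,
    sum_ins (fun π => if π.inD ∧ π.typeGe2 then X ^ π.d else 0),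
    Fintype.sum_prod_type]
  refine Finset.sum_congr rfl fun σ _ => ?_
  rw [Fintype.sum_prod_type]
  have key : ∀ (π : SignedPerm (m+1)), π.inD →
      ((if π.inD ∧ π.typeGe2 then (X : Polynomial ℚ) ^ π.d else 0)
        = if π.typeGe2 then X ^ π.d else 0) := by
    intro π h
    by_cases hT : π.typeGe2 <;> simp [h, hT]
  by_cases hσ : σ.inD
  · rw [if_pos hσ, SIns]
    refine Finset.sum_congr rfl fun j _ => ?_
    rw [Fintype.sum_bool]
    dsimp only
    have ht : ¬ (ins σ j true).inD := by rw [inD_ins]; simp [hσ]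
    have hf : (ins σ j false).inD := by rw [inD_ins]; simp [hσ]
    rw [if_neg (show ¬ ((ins σ j true).inD ∧ (ins σ j true).typeGe2) from
        fun hc => ht hc.1), key _ hf, zero_add]
  · rw [if_neg hσ, SIns]
    refine Finset.sum_congr rfl fun j _ => ?_
    rw [Fintype.sum_bool]
    dsimp only
    have ht : (ins σ j true).inD := by rw [inD_ins]; simp [hσ]
    have hf : ¬ (ins σ j false).inD := by rw [inD_ins]; simp [hσ]
    rw [if_neg (show ¬ ((ins σ j false).inD ∧ (ins σ j false).typeGe2) from
        fun hc => hf hc.1), key _ ht, add_zero]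

lemma midP_flip (hm : 2 ≤ m) (σ : SignedPerm m) :
    midP (flip (by omega) σ) = midP σ := by
  rw [midP, midP, d_flip hm]
  refine Finset.sum_congr rfl fun i hi => ?_
  have := Finset.mem_Ico.mp hi
  simp only [mem_flip_high (by omega : 0 < m) σ (i := i) (by omega)]

lemma SIns_true_flip (hm : 2 ≤ m) (σ : SignedPerm m) :
    SIns (flip (by omega) σ) true = SIns σ true := by
  rw [SIns_eval hm, SIns_eval hm, d_flip hm, dc_flip, midP_flip hm]
  simp only [typeGe2_flip hm σ]

lemma step_B (hm : 2 ≤ m) :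
    polyDGe2 (m+1) = ∑ σ ∈ Finset.univ.filter (fun σ : SignedPerm m => σ.inD),
      (SIns σ false + SIns σ true) := by
  rw [step_A hm, Finset.sum_ite, Finset.sum_add_distrib]
  congr 1
  refine Finset.sum_nbij' (i := flip (by omega : 0 < m)) (j := flip (by omega : 0 < m))
    (fun σ hσ => ?_) (fun σ hσ => ?_) (fun σ _ => flip_flip _ σ)
    (fun σ _ => flip_flip _ σ) (fun σ _ => (SIns_true_flip hm σ).symm)
  · simp only [Finset.mem_filter, Finset.mem_univ, true_and] at *
    exact (inD_flip _ σ).mpr hσ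
  · simp only [Finset.mem_filter, Finset.mem_univ, true_and] at *
    simp [inD_flip, hσ]

lemma polyD1_eq : polyD1 m = ∑ σ ∈ Finset.univ.filter (fun σ : SignedPerm m => σ.inD),
    (if σ.type1 then (X : Polynomial ℚ)^σ.d else 0) := by
  rw [polyD1, ← Finset.filter_filter, Finset.sum_filter]

lemma polyD01_eq : polyD01 m = ∑ σ ∈ Finset.univ.filter (fun σ : SignedPerm m => σ.inD),
    (if σ.type01 then (X : Polynomial ℚ)^σ.d else 0) := by
  rw [polyD01, ← Finset.filter_filter, Finset.sum_filter]

lemma polyD0Ge2_eq : polyD0Ge2 m = ∑ σ ∈ Finset.univ.filter (fun σ : SignedPerm m => σ.inD),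
    (if σ.type0Ge2 then (X : Polynomial ℚ)^σ.d else 0) := by
  rw [polyD0Ge2, ← Finset.filter_filter, Finset.sum_filter]

lemma polyDGe2_eq : polyDGe2 m = ∑ σ ∈ Finset.univ.filter (fun σ : SignedPerm m => σ.inD),
    (if σ.typeGe2 then (X : Polynomial ℚ)^σ.d else 0) := by
  rw [polyDGe2, ← Finset.filter_filter, Finset.sum_filter]

lemma deriv_eq : derivative (polyDGe2 m)
    = ∑ σ ∈ Finset.univ.filter (fun σ : SignedPerm m => σ.inD),
      (if σ.typeGe2 then C (σ.d : ℚ) * X^(σ.d - 1) else 0) := by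
  rw [polyDGe2, ← Finset.filter_filter, Finset.sum_filter, map_sum]
  refine Finset.sum_congr rfl fun σ _ => ?_
  by_cases hT : σ.typeGe2
  · rw [if_pos hT, if_pos hT, derivative_X_pow]
  · rw [if_neg hT, if_neg hT, map_zero]

lemma alg_ge2 (k : ℕ) (hm : 2 ≤ m) (hk : k ≤ m - 2) :
    (X : Polynomial ℚ) * ((X^(1+k) + (k • (X:Polynomial ℚ)^k + ((m-2)-k) • X^(k+1)) + X^k)
      + ((k • (X:Polynomial ℚ)^k + ((m-2)-k) • X^(k+1)) + X^(k+1)))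
    = (C (2 * (((m+1 : ℕ) : ℚ) - 2)) * X + 1) * X * X^k
      + 2 * X^2 * (1 - X) * (C (k:ℚ) * X^(k-1)) := by
  have hc2 : (((m-2) - k : ℕ) : Polynomial ℚ) = C ((m:ℚ) - 2 - (k:ℚ)) := by
    rw [← Polynomial.C_eq_natCast]
    congr 1
    rw [Nat.cast_sub hk, Nat.cast_sub (by omega : 2 ≤ m)]
    norm_num
  have hck : ((k : ℕ) : Polynomial ℚ) = C ((k:ℚ)) := by
    rw [← Polynomial.C_eq_natCast]
  simp only [nsmul_eq_mul, hc2, hck]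
  rcases k with _ | e
  · simp only [Nat.cast_zero, pow_zero, Nat.sub_zero]
    push_cast
    simp only [map_sub, map_mul, map_add, map_one, map_ofNat, map_natCast, map_zero]
    ring
  · simp only [Nat.add_sub_cancel]
    push_cast
    simp only [map_sub, map_mul, map_add, map_one, map_ofNat, map_natCast]
    ring

end DRec

open Polynomial in
/-- **Proposition 3.3 (iii).** Difference-differential equation for `D_n^{≥2}(t)`,
cleared of the denominator `t`. -/
theorem polyDGe2_recurrence (n : ℕ) (hn : 3 ≤ n) :
    X * polyDGe2 n = (C (2 * ((n : ℚ) - 2)) * X + 1) * X * polyDGe2 (n - 1)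
      + 2 * X ^ 2 * (1 - X) * derivative (polyDGe2 (n - 1))
      + X * polyD1 (n - 1) + polyD01 (n - 1) + X * polyD0Ge2 (n - 1) := by
  obtain ⟨m, rfl⟩ : ∃ m, n = m + 1 := ⟨n - 1, by omega⟩
  have hm : 2 ≤ m := by omega
  simp only [Nat.add_sub_cancel]
  rw [DRec.step_B hm, DRec.polyD1_eq, DRec.polyD01_eq, DRec.polyD0Ge2_eq, DRec.deriv_eq,
    DRec.polyDGe2_eq, Finset.mul_sum, Finset.mul_sum, Finset.mul_sum, Finset.mul_sum,
    Finset.mul_sum, ← Finset.sum_add_distrib, ← Finset.sum_add_distrib,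
    ← Finset.sum_add_distrib, ← Finset.sum_add_distrib]
  refine Finset.sum_congr rfl fun σ hσ => ?_
  rw [DRec.SIns_eval hm σ false, DRec.SIns_eval hm σ true]
  simp only [Bool.false_eq_true, Bool.true_eq_false, if_false, eq_self_iff_true, if_true,
    add_zero, zero_add]
  have hd := DRec.d_split hm σ
  by_cases h0 : (0 : ℕ) ∈ σ.ddes <;> by_cases h1 : (1 : ℕ) ∈ σ.ddes
  · -- type 0,1
    have hT2 : ¬ σ.typeGe2 := fun hT => hT.1 h0
    have h1' : ¬ σ.type1 := fun hT => hT.2 h0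
    have h01 : σ.type01 := ⟨h0, h1⟩
    have h0G : ¬ σ.type0Ge2 := fun hT => hT.2 h1
    rw [if_pos h0, if_pos h1] at hd
    simp only [if_neg hT2, if_neg h1', if_pos h01, if_neg h0G]
    rw [show σ.d = 2 + DRec.dc σ by omega]
    ring
  · -- type 0,≥2
    have hT2 : ¬ σ.typeGe2 := fun hT => hT.1 h0
    have h1' : ¬ σ.type1 := fun hT => hT.2 h0
    have h01 : ¬ σ.type01 := fun hT => h1 hT.2
    have h0G : σ.type0Ge2 := ⟨h0, h1⟩
    rw [if_pos h0, if_neg h1] at hd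
    simp only [if_neg hT2, if_neg h1', if_neg h01, if_pos h0G]
    rw [show σ.d = 1 + DRec.dc σ by omega]
    ring
  · -- type 1
    have hT2 : ¬ σ.typeGe2 := fun hT => hT.2 h1
    have h1' : σ.type1 := ⟨h1, h0⟩
    have h01 : ¬ σ.type01 := fun hT => h0 hT.1
    have h0G : ¬ σ.type0Ge2 := fun hT => h0 hT.1
    rw [if_neg h0, if_pos h1] at hd
    simp only [if_neg hT2, if_pos h1', if_neg h01, if_neg h0G]
    rw [show σ.d = 1 + DRec.dc σ by omega]
    ring
  · -- type ≥2
    have hT2 : σ.typeGe2 := ⟨h0, h1⟩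
    have h1' : ¬ σ.type1 := fun hT => h1 hT.1
    have h01 : ¬ σ.type01 := fun hT => h0 hT.1
    have h0G : ¬ σ.type0Ge2 := fun hT => h0 hT.1
    simp only [if_pos hT2, if_neg h1', if_neg h01, if_neg h0G]
    rw [DRec.midP_eval hm σ hT2, DRec.dc_eq_d hm σ hT2]
    linear_combination DRec.alg_ge2 σ.d hm (DRec.d_le hm σ hT2)
end

section
/- For every n ≥ 3, the following identity of polynomials in t holds: D_n^{0,≥2}(t) = (2n-3)t·D_{n-1}^{0,≥2}(t) + 2t(1-t)·(D_{n-1}^{0,≥2})'(t) + t·D_{n-1}^1(t) + D_{n-1}^{0,1}(t) + t·D_{n-1}^{≥2}(t), where ′ denotes the formal derivative of polynomials. -/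
namespace SubEuler
open SignedPerm Finset

variable {m : ℕ}

/-- insertion of the letter `±(m+1)` at (1-indexed) word position `↑j + 1`. -/
def ins (w : SignedPerm m) (j : Fin (m+1)) (s : Bool) : SignedPerm (m+1) :=
  ⟨(finSuccEquiv' j).trans ((Equiv.optionCongr w.1).trans (finSuccEquiv' (Fin.last m)).symm),
   fun k => (finSuccEquiv' j k).elim s w.2⟩

/-- negate the letter of absolute value 1. -/
def negOne (w : SignedPerm m) : SignedPerm m :=
  ⟨w.1, fun i => if (w.1 i : ℕ) = 0 then !(w.2 i) else w.2 i⟩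

def phi (q : SignedPerm m) (j : Fin (m+1)) (s : Bool) : SignedPerm (m+1) :=
  ins (if s then negOne q else q) j s

lemma word_val {n : ℕ} (p : SignedPerm n) (k : ℕ) (h1 : 1 ≤ k) (h2 : k ≤ n) :
    p.word k = (if p.2 ⟨k-1, by omega⟩ then -1 else 1) * ((p.1 ⟨k-1, by omega⟩ : ℕ) + 1) :=
  dif_pos ⟨h1, h2⟩

lemma word_bound {n : ℕ} (p : SignedPerm n) (k : ℕ) :
    -(n:ℤ) ≤ p.word k ∧ p.word k ≤ n := by
  unfold SignedPerm.word
  split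
  · next h =>
    have hb : ((p.1 ⟨k-1, by omega⟩ : ℕ) : ℤ) + 1 ≤ n := by
      have := (p.1 ⟨k-1, by omega⟩).2
      omega
    have hb0 : (0:ℤ) ≤ ((p.1 ⟨k-1, by omega⟩ : ℕ) : ℤ) := Int.natCast_nonneg _
    split <;> push_cast <;> omega
  · constructor <;> simp <;> positivity

lemma ins_word_at (w : SignedPerm m) (j : Fin (m+1)) (s : Bool) :
    (ins w j s).word ((j:ℕ)+1) = (if s then -1 else 1) * ((m:ℤ)+1) := by
  rw [word_val _ _ (by omega) (by omega)]
  have hj : (⟨(j:ℕ)+1-1, by omega⟩ : Fin (m+1)) = j := by ext; simp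
  rw [hj]
  have h1 : (ins w j s).1 j = Fin.last m := by
    simp [ins, finSuccEquiv'_at]
  have h2 : (ins w j s).2 j = s := by
    simp [ins, finSuccEquiv'_at]
  rw [h1, h2]
  simp [Fin.last]

lemma ins_word_succAbove (w : SignedPerm m) (j : Fin (m+1)) (s : Bool) (i : Fin m) :
    (ins w j s).word ((j.succAbove i : ℕ)+1) = w.word ((i:ℕ)+1) := by
  rw [word_val _ _ (by omega) (by omega), word_val _ _ (by omega) (by omega)]
  have hj : (⟨((j.succAbove i : ℕ))+1-1, by omega⟩ : Fin (m+1)) = j.succAbove i := by ext; simp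
  have hi : (⟨(i:ℕ)+1-1, by omega⟩ : Fin m) = i := by ext; simp
  rw [hj, hi]
  have h1 : (ins w j s).1 (j.succAbove i) = Fin.castSucc (w.1 i) := by
    simp [ins, finSuccEquiv'_succAbove, ← Fin.succAbove_last]
  have h2 : (ins w j s).2 (j.succAbove i) = w.2 i := by
    simp [ins, finSuccEquiv'_succAbove]
  rw [h1, h2]
  simp

lemma ins_word_lt (w : SignedPerm m) (j : Fin (m+1)) (s : Bool) (k : ℕ)
    (h1 : 1 ≤ k) (h2 : k ≤ (j:ℕ)) : (ins w j s).word k = w.word k := by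
  have hkm : k - 1 < m := by have := j.2; omega
  have hsa : j.succAbove ⟨k-1, hkm⟩ = Fin.castSucc ⟨k-1, hkm⟩ :=
    Fin.succAbove_of_castSucc_lt _ _ (by simp [Fin.lt_def]; omega)
  have := ins_word_succAbove w j s ⟨k-1, hkm⟩
  rw [hsa] at this
  simpa [show k - 1 + 1 = k by omega] using this

lemma ins_word_gt (w : SignedPerm m) (j : Fin (m+1)) (s : Bool) (k : ℕ)
    (h1 : (j:ℕ)+2 ≤ k) (h2 : k ≤ m+1) : (ins w j s).word k = w.word (k-1) := by
  have hkm : k - 2 < m := by omega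
  have hsa : j.succAbove ⟨k-2, hkm⟩ = Fin.succ ⟨k-2, hkm⟩ :=
    Fin.succAbove_of_le_castSucc _ _ (by simp [Fin.le_def]; omega)
  have := ins_word_succAbove w j s ⟨k-2, hkm⟩
  rw [hsa] at this
  simpa [Fin.succ, show k-2+1 = k-1 by omega, show k-1+1 = k by omega] using this


lemma mem_ddes {n : ℕ} (p : SignedPerm n) (i : ℕ) :
    i ∈ p.ddes ↔ i < n ∧ p.entry (i+1) < p.entry i := by
  simp [SignedPerm.ddes]

lemma entry_pos {n : ℕ} (p : SignedPerm n) (k : ℕ) (h : k ≠ 0) : p.entry k = p.word k :=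
  if_neg h

lemma entry_zero {n : ℕ} (p : SignedPerm n) : p.entry 0 = -(p.word 2) := rfl

lemma mem_ddes_ins (hm : 2 ≤ m) (w : SignedPerm m) (j : Fin (m+1)) (s : Bool) (i : ℕ)
    (hi : i ≤ m) :
    (i ∈ (ins w j s).ddes) ↔
      (if i = 0 ∧ (j:ℕ) = 1 then s = true
       else if i < (j:ℕ) then i ∈ w.ddes
       else if i = (j:ℕ) then s = true
       else if i = (j:ℕ)+1 then s = false
       else (i-1) ∈ w.ddes) := by
  have hJm : (j:ℕ) ≤ m := Nat.lt_succ_iff.mp j.isLt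
  rw [mem_ddes]
  rcases Nat.eq_zero_or_pos i with rfl | hi1
  · -- i = 0
    rw [entry_zero, entry_pos _ _ (by omega)]
    rcases Nat.lt_or_ge 1 (j:ℕ) with hJ | hJ
    · -- J ≥ 2
      rw [ins_word_lt w j s 2 (by omega) (by omega), ins_word_lt w j s 1 (by omega) (by omega),
        if_neg (by omega), if_pos (by omega), mem_ddes, entry_zero, entry_pos _ _ (by omega)]
      constructor
      · rintro ⟨-, h⟩; exact ⟨by omega, h⟩
      · rintro ⟨-, h⟩; exact ⟨by omega, h⟩
    · rcases Nat.eq_zero_or_pos (j:ℕ) with hJ0 | hJ1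
      · -- J = 0 : entry v 1 = ±N, entry v 0 = -word w 1
        rw [if_neg (by omega), if_neg (by omega), if_pos (by omega)]
        have h2 : (ins w j s).word 2 = w.word 1 := by
          rw [ins_word_gt w j s 2 (by omega) (by omega)]
        have h1 : (ins w j s).word 1 = (if s then -1 else 1) * ((m:ℤ)+1) := by
          have := ins_word_at w j s; rwa [hJ0] at this
        rw [h1, h2]
        have hb := word_bound w 1
        cases s <;> simp <;> omega
      · -- J = 1
        have hJ1' : (j:ℕ) = 1 := by omega
        rw [if_pos ⟨rfl, hJ1'⟩]
        have h2 : (ins w j s).word 2 = (if s then -1 else 1) * ((m:ℤ)+1) := by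
          have := ins_word_at w j s; rwa [hJ1'] at this
        have h1 : (ins w j s).word 1 = w.word 1 :=
          ins_word_lt w j s 1 (by omega) (by omega)
        rw [h1, h2]
        have hb := word_bound w 1
        cases s <;> simp <;> omega
  · -- i ≥ 1
    rw [entry_pos _ _ (by omega), entry_pos _ _ (by omega), if_neg (by omega)]
    rcases Nat.lt_or_ge i (j:ℕ) with hlt | hge
    · rw [if_pos hlt, mem_ddes, entry_pos _ _ (by omega), entry_pos _ _ (by omega),
        ins_word_lt w j s i (by omega) (by omega), ins_word_lt w j s (i+1) (by omega) (by omega)]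
      constructor
      · rintro ⟨-, h⟩; exact ⟨by omega, h⟩
      · rintro ⟨-, h⟩; exact ⟨by omega, h⟩
    · rcases Nat.eq_or_lt_of_le hge with heq | hgt
      · -- i = J ≥ 1
        rw [if_pos heq.symm]
        have h1 : (ins w j s).word i = w.word i := ins_word_lt w j s i (by omega) (by omega)
        have h2 : (ins w j s).word (i+1) = (if s then -1 else 1) * ((m:ℤ)+1) := by
          have := ins_word_at w j s; rwa [heq] at this
        rw [h1, h2]
        have hb := word_bound w i
        cases s <;> simp <;> omega
      · rcases Nat.eq_or_lt_of_le hgt with heq1 | hgt1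
        · -- i = J + 1
          rw [if_neg (by omega), if_neg (by omega), if_pos (show i = (j:ℕ)+1 by omega)]
          have h1 : (ins w j s).word i = (if s then -1 else 1) * ((m:ℤ)+1) := by
            have := ins_word_at w j s; rwa [show (j:ℕ)+1 = i by omega] at this
          have h2 : (ins w j s).word (i+1) = w.word i := by
            rw [ins_word_gt w j s (i+1) (by omega) (by omega)]; congr 1
          rw [h1, h2]
          have hb := word_bound w i
          cases s <;> simp <;> omega
        · -- i ≥ J + 2
          rw [if_neg (by omega), if_neg (by omega), if_neg (by omega), mem_ddes,
            entry_pos _ _ (by omega), entry_pos _ _ (by omega),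
            ins_word_gt w j s i (by omega) (by omega),
            ins_word_gt w j s (i+1) (by omega) (by omega),
            show i + 1 - 1 = i - 1 + 1 by omega]
          constructor
          · rintro ⟨-, h⟩; exact ⟨by omega, h⟩
          · rintro ⟨-, h⟩; exact ⟨by omega, h⟩


lemma ins_fst_at (w : SignedPerm m) (j : Fin (m+1)) (s : Bool) :
    (ins w j s).1 j = Fin.last m := by simp [ins, finSuccEquiv'_at]

lemma ins_snd_at (w : SignedPerm m) (j : Fin (m+1)) (s : Bool) :
    (ins w j s).2 j = s := by simp [ins, finSuccEquiv'_at]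

lemma ins_fst_succAbove (w : SignedPerm m) (j : Fin (m+1)) (s : Bool) (i : Fin m) :
    (ins w j s).1 (j.succAbove i) = Fin.castSucc (w.1 i) := by
  simp [ins, finSuccEquiv'_succAbove, ← Fin.succAbove_last]

lemma ins_snd_succAbove (w : SignedPerm m) (j : Fin (m+1)) (s : Bool) (i : Fin m) :
    (ins w j s).2 (j.succAbove i) = w.2 i := by
  simp [ins, finSuccEquiv'_succAbove]

lemma negOne_word (w : SignedPerm m) (k : ℕ) (h1 : 1 ≤ k) (h2 : k ≤ m) :
    ((negOne w).word k = w.word k ∧ (2 ≤ w.word k ∨ w.word k ≤ -2))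
  ∨ ((w.word k = 1 ∨ w.word k = -1) ∧ (negOne w).word k = -(w.word k)) := by
  have hkm : k - 1 < m := by omega
  rw [word_val _ k h1 h2, word_val _ k h1 h2]
  show (if (negOne w).2 ⟨k-1, hkm⟩ then (-1:ℤ) else 1) * (((negOne w).1 ⟨k-1,hkm⟩ : ℕ) + 1) = _
    ∧ _ ∨ _
  by_cases hc : (w.1 ⟨k-1,hkm⟩ : ℕ) = 0
  · right
    cases hb : w.2 ⟨k-1,hkm⟩ <;> simp [negOne, hc, hb]
  · left
    have h2' : 1 ≤ (w.1 ⟨k-1,hkm⟩ : ℕ) := by omega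
    cases hb : w.2 ⟨k-1,hkm⟩ <;> simp [negOne, hc, hb] <;> push_cast <;> omega

lemma word_one_unique (w : SignedPerm m) (k k' : ℕ) (h1 : 1 ≤ k) (h2 : k ≤ m)
    (h1' : 1 ≤ k') (h2' : k' ≤ m) (hne : k ≠ k')
    (ha : w.word k = 1 ∨ w.word k = -1) (hb : w.word k' = 1 ∨ w.word k' = -1) : False := by
  have hkm : k - 1 < m := by omega
  have hkm' : k' - 1 < m := by omega
  rw [word_val _ k h1 h2] at ha
  rw [word_val _ k' h1' h2'] at hb
  have ea : (w.1 ⟨k-1,hkm⟩ : ℕ) = 0 := by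
    rcases ha with h | h <;> [skip; skip] <;>
    · rcases Nat.eq_zero_or_pos (w.1 ⟨k-1,hkm⟩ : ℕ) with h0 | h0
      · exact h0
      · exfalso; revert h; split <;> push_cast <;> omega
  have eb : (w.1 ⟨k'-1,hkm'⟩ : ℕ) = 0 := by
    rcases hb with h | h <;> [skip; skip] <;>
    · rcases Nat.eq_zero_or_pos (w.1 ⟨k'-1,hkm'⟩ : ℕ) with h0 | h0
      · exact h0
      · exfalso; revert h; split <;> push_cast <;> omega
  have : w.1 ⟨k-1,hkm⟩ = w.1 ⟨k'-1,hkm'⟩ := by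
    ext; rw [ea, eb]
  have := w.1.injective this
  have : k - 1 = k' - 1 := congrArg Fin.val this
  omega

lemma negOne_ddes (hm : 2 ≤ m) (w : SignedPerm m) : (negOne w).ddes = w.ddes := by
  ext i
  rw [mem_ddes, mem_ddes]
  refine and_congr_right fun hi => ?_
  rcases Nat.eq_zero_or_pos i with rfl | hi1
  · rw [entry_zero, entry_zero, entry_pos _ _ (by omega), entry_pos _ _ (by omega)]
    have d1 := negOne_word w 1 (by omega) (by omega)
    have d2 := negOne_word w 2 (by omega) (by omega)
    have hu := word_one_unique w 1 2 (by omega) (by omega) (by omega) (by omega) (by omega)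
    simp only [Nat.zero_add]
    constructor <;> intro h
    · rcases d1 with ⟨e1, b1⟩ | ⟨b1, e1⟩ <;> rcases d2 with ⟨e2, b2⟩ | ⟨b2, e2⟩ <;>
        first
        | (exfalso; exact hu b1 b2)
        | omega
    · rcases d1 with ⟨e1, b1⟩ | ⟨b1, e1⟩ <;> rcases d2 with ⟨e2, b2⟩ | ⟨b2, e2⟩ <;>
        first
        | (exfalso; exact hu b1 b2)
        | omega
  · rw [entry_pos _ _ (by omega), entry_pos _ _ (by omega),
      entry_pos _ _ (by omega), entry_pos _ _ (by omega)]
    have d1 := negOne_word w i (by omega) (by omega)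
    have d2 := negOne_word w (i+1) (by omega) (by omega)
    have hu := word_one_unique w i (i+1) (by omega) (by omega) (by omega) (by omega) (by omega)
    constructor <;> intro h
    · rcases d1 with ⟨e1, b1⟩ | ⟨b1, e1⟩ <;> rcases d2 with ⟨e2, b2⟩ | ⟨b2, e2⟩ <;>
        first
        | (exfalso; exact hu b1 b2)
        | omega
    · rcases d1 with ⟨e1, b1⟩ | ⟨b1, e1⟩ <;> rcases d2 with ⟨e2, b2⟩ | ⟨b2, e2⟩ <;>
        first
        | (exfalso; exact hu b1 b2)
        | omega

lemma negOne_d (hm : 2 ≤ m) (w : SignedPerm m) : (negOne w).d = w.d := by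
  unfold SignedPerm.d; rw [negOne_ddes hm]

lemma even_card_flip {k : ℕ} (b : Fin k → Bool) (i0 : Fin k) :
    Even (univ.filter fun i => (if i = i0 then !b i else b i) = true).card ↔
    ¬ Even (univ.filter fun i => b i = true).card := by
  rw [card_filter, card_filter,
    ← Finset.sum_erase_add _ _ (mem_univ i0), ← Finset.sum_erase_add _ _ (mem_univ i0)]
  have he : ∀ i ∈ univ.erase i0,
      (if (if i = i0 then !b i else b i) = true then 1 else 0) =
      (if b i = true then (1:ℕ) else 0) := by
    intro i hi
    rw [if_neg (Finset.ne_of_mem_erase hi)]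
  rw [Finset.sum_congr rfl he]
  cases hb : b i0 <;> simp [hb, Nat.even_iff, Nat.add_mod] <;> omega

lemma negOne_inD (hm : 1 ≤ m) (w : SignedPerm m) : (negOne w).inD ↔ ¬ w.inD := by
  unfold SignedPerm.inD
  set i0 : Fin m := w.1.symm ⟨0, by omega⟩ with hi0
  have hcond : ∀ i : Fin m, ((w.1 i : ℕ) = 0) ↔ i = i0 := by
    intro i
    constructor
    · intro h
      have : w.1 i = ⟨0, by omega⟩ := by ext; exact h
      rw [hi0, ← this]; simp
    · rintro rfl
      simp [hi0]
  have : ∀ i : Fin m, ((negOne w).2 i = true) ↔ ((if i = i0 then !w.2 i else w.2 i) = true) := by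
    intro i
    simp only [negOne]
    by_cases h : i = i0
    · rw [if_pos ((hcond i).mpr h), if_pos h]
    · rw [if_neg (fun hc => h ((hcond i).mp hc)), if_neg h]
  rw [filter_congr (fun i _ => by rw [this i])]
  exact even_card_flip w.2 i0

lemma card_snd_ins (w : SignedPerm m) (j : Fin (m+1)) (s : Bool) :
    (univ.filter fun k => (ins w j s).2 k = true).card
    = (if s then 1 else 0) + (univ.filter fun i => w.2 i = true).card := by
  rw [card_filter, card_filter, Fin.sum_univ_succAbove _ j, ins_snd_at]
  congr 1
  apply Finset.sum_congr rfl
  intro i _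
  rw [ins_snd_succAbove]

lemma inD_phi (hm : 2 ≤ m) (q : SignedPerm m) (j : Fin (m+1)) (s : Bool) (hq : q.inD) :
    (phi q j s).inD := by
  unfold phi
  cases s
  · show SignedPerm.inD _
    unfold SignedPerm.inD at *
    rw [if_neg (by simp), card_snd_ins]
    simpa using hq
  · have hodd : ¬ (negOne q).inD := fun h => ((negOne_inD (by omega) q).mp h) hq
    show SignedPerm.inD _
    unfold SignedPerm.inD at *
    rw [if_pos rfl, card_snd_ins]
    simp only [if_true] at *
    rw [Nat.even_iff] at *
    omega

lemma negOne_negOne (w : SignedPerm m) : negOne (negOne w) = w := by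
  refine Prod.ext rfl (funext fun i => ?_)
  simp only [negOne]
  by_cases h : (w.1 i : ℕ) = 0 <;> simp [h]


lemma ins_inj {w w' : SignedPerm m} {j j' : Fin (m+1)} {s s' : Bool}
    (h : ins w j s = ins w' j' s') : w = w' ∧ j = j' ∧ s = s' := by
  have h1 : (ins w j s).1 = (ins w' j' s').1 := by rw [h]
  have h2 : (ins w j s).2 = (ins w' j' s').2 := by rw [h]
  have hjj : j = j' := by
    have e1 : (ins w' j' s').1 j = Fin.last m := by rw [← h1, ins_fst_at]
    have e2 : (ins w' j' s').1 j' = Fin.last m := ins_fst_at w' j' s'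
    exact (ins w' j' s').1.injective (e1.trans e2.symm)
  subst hjj
  have hss : s = s' := by
    have := ins_snd_at w j s
    rw [h2, ins_snd_at] at this
    exact this.symm
  subst hss
  refine ⟨Prod.ext ?_ ?_, rfl, rfl⟩
  · apply Equiv.ext
    intro i
    apply Fin.castSucc_injective
    rw [← ins_fst_succAbove w j s i, ← ins_fst_succAbove w' j s i, h1]
  · funext i
    rw [← ins_snd_succAbove w j s i, ← ins_snd_succAbove w' j s i, h2]

lemma phi_inj {q q' : SignedPerm m} {j j' : Fin (m+1)} {s s' : Bool}
    (h : phi q j s = phi q' j' s') : q = q' ∧ j = j' ∧ s = s' := by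
  obtain ⟨hw, hj, hs⟩ := ins_inj h
  subst hs
  refine ⟨?_, hj, rfl⟩
  cases s
  · simpa using hw
  · simp only [if_true] at hw
    have := congrArg negOne hw
    rwa [negOne_negOne, negOne_negOne] at this

lemma mem_ddes_lt {n : ℕ} (p : SignedPerm n) {i : ℕ} (h : i ∈ p.ddes) : i < n :=
  ((mem_ddes p i).mp h).1

lemma ddes_ins_eq (hm : 2 ≤ m) (w : SignedPerm m) (j : Fin (m+1)) (s : Bool)
    (hJ : (j:ℕ) ≠ 1) :
    (ins w j s).ddes =
      ((w.ddes.erase (j:ℕ)).image (fun i => if i < (j:ℕ) then i else i + 1))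
      ∪ (if s then {(j:ℕ)} else if (j:ℕ) < m then {(j:ℕ)+1} else ∅) := by
  have hJm : (j:ℕ) ≤ m := Nat.lt_succ_iff.mp j.isLt
  ext i
  simp only [Finset.mem_union, Finset.mem_image, Finset.mem_erase]
  by_cases him : i ≤ m
  · rw [mem_ddes_ins hm w j s i him]
    constructor
    · intro hpred
      split_ifs at hpred with h01 hlt heqJ heqJ1
      · exact absurd h01.2 hJ
      · exact Or.inl ⟨i, ⟨by omega, hpred⟩, if_pos hlt⟩
      · right; cases s
        · simp at hpred
        · simp [heqJ]
      · right; cases s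
        · have hJm' : (j:ℕ) < m := by
            have := heqJ1 ▸ him; omega
          simp [heqJ1, hJm']
        · simp at hpred
      · refine Or.inl ⟨i - 1, ⟨by omega, hpred⟩, ?_⟩
        rw [if_neg (by omega)]
        omega
    · rintro (⟨a, ⟨haJ, haW⟩, rfl⟩ | hX)
      · have ham := mem_ddes_lt w haW
        by_cases hlt : a < (j:ℕ)
        · rw [if_pos hlt, if_neg (by omega), if_pos hlt]
          exact haW
        · rw [if_neg hlt, if_neg (by omega), if_neg (by omega), if_neg (by omega),
            if_neg (by omega)]
          simpa using haW
      · cases s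
        · by_cases hJm' : (j:ℕ) < m
          · simp only [if_neg (Bool.false_ne_true), if_pos hJm', Finset.mem_singleton] at hX
            subst hX
            rw [if_neg (by omega), if_neg (by omega), if_neg (by omega), if_pos rfl]
          · simp [hJm'] at hX
        · simp only [if_true, Finset.mem_singleton] at hX
          subst hX
          rw [if_neg (by omega), if_neg (by omega), if_pos rfl]
  · constructor
    · intro h
      exact absurd (mem_ddes_lt _ h) (by omega)
    · rintro (⟨a, ⟨haJ, haW⟩, rfl⟩ | hX)
      · exfalso
        have := mem_ddes_lt w haW
        by_cases h : a < (j:ℕ) <;> simp [h] at him <;> omega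
      · exfalso
        cases s
        · by_cases hJm' : (j:ℕ) < m
          · simp [hJm'] at hX; omega
          · simp [hJm'] at hX
        · simp at hX; omega

lemma d_ins (hm : 2 ≤ m) (w : SignedPerm m) (j : Fin (m+1)) (s : Bool)
    (hJ : (j:ℕ) ≠ 1) :
    (ins w j s).d = w.d - (if (j:ℕ) ∈ w.ddes then 1 else 0)
      + (if s then 1 else if (j:ℕ) < m then 1 else 0) := by
  unfold SignedPerm.d
  rw [ddes_ins_eq hm w j s hJ]
  have hinj : Set.InjOn (fun i => if i < (j:ℕ) then i else i + 1) (w.ddes.erase (j:ℕ)) := by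
    intro a ha b hb hab
    simp only at hab
    split_ifs at hab <;> omega
  have hdisj : Disjoint ((w.ddes.erase (j:ℕ)).image (fun i => if i < (j:ℕ) then i else i + 1))
      (if s then ({(j:ℕ)} : Finset ℕ) else if (j:ℕ) < m then {(j:ℕ)+1} else ∅) := by
    rw [Finset.disjoint_left]
    rintro x hx hX
    obtain ⟨a, ha, rfl⟩ := Finset.mem_image.mp hx
    have haJ : a ≠ (j:ℕ) := (Finset.mem_erase.mp ha).1
    cases s
    · by_cases hJm' : (j:ℕ) < m
      · simp only [if_neg (Bool.false_ne_true), if_pos hJm', Finset.mem_singleton] at hX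
        split_ifs at hX <;> omega
      · simp [hJm'] at hX
    · simp only [if_true, Finset.mem_singleton] at hX
      split_ifs at hX <;> omega
  rw [Finset.card_union_of_disjoint hdisj, Finset.card_image_of_injOn hinj]
  have hc2 : (if s then ({(j:ℕ)} : Finset ℕ) else if (j:ℕ) < m then {(j:ℕ)+1} else ∅).card
      = (if s then 1 else if (j:ℕ) < m then 1 else 0) := by
    cases s
    · by_cases hJm' : (j:ℕ) < m <;> simp [hJm']
    · simp
  rw [hc2]
  by_cases hJW : (j:ℕ) ∈ w.ddes
  · rw [Finset.card_erase_of_mem hJW, if_pos hJW]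
  · rw [Finset.erase_eq_of_notMem hJW, if_neg hJW]
    omega


lemma two_mul_cardD (k : ℕ) (hk : 1 ≤ k) :
    2 * (univ.filter fun p : SignedPerm k => p.inD).card = 2^k * k.factorial := by
  classical
  have hflip : ∀ p : SignedPerm k, SignedPerm k :=
    fun p => ⟨p.1, fun i => if i = ⟨0, by omega⟩ then !p.2 i else p.2 i⟩
  set i0 : Fin k := ⟨0, by omega⟩ with hi0
  set fl : SignedPerm k → SignedPerm k :=
    fun p => ⟨p.1, fun i => if i = i0 then !p.2 i else p.2 i⟩ with hfl
  have hinv : ∀ p, fl (fl p) = p := by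
    intro p
    refine Prod.ext rfl (funext fun i => ?_)
    simp only [hfl]
    by_cases h : i = i0 <;> simp [h]
  have hpar : ∀ p : SignedPerm k, (fl p).inD ↔ ¬ p.inD := by
    intro p
    unfold SignedPerm.inD
    exact even_card_flip p.2 i0
  have hcard : (univ.filter fun p : SignedPerm k => p.inD).card
      = (univ.filter fun p : SignedPerm k => ¬ p.inD).card := by
    apply Finset.card_bij' (fun p _ => fl p) (fun p _ => fl p)
    · intro a ha
      simp only [mem_filter, mem_univ, true_and] at ha ⊢
      rw [hpar]; exact fun h => h ha
    · intro a ha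
      simp only [mem_filter, mem_univ, true_and] at ha ⊢
      exact (hpar a).mpr ha
    · intro a _; exact hinv a
    · intro a _; exact hinv a
  have htot := Finset.card_filter_add_card_filter_not
      (s := (univ : Finset (SignedPerm k))) (fun p : SignedPerm k => p.inD)
  have huniv : (univ : Finset (SignedPerm k)).card = 2^k * k.factorial := by
    rw [Finset.card_univ]
    rw [Fintype.card_prod, Fintype.card_perm, Fintype.card_fun]
    simp [Fintype.card_fin, Nat.mul_comm]
  omega


lemma phi_injOn (hm : 2 ≤ m) :
    Set.InjOn (fun x : SignedPerm m × (Fin (m+1) × Bool) => phi x.1 x.2.1 x.2.2)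
      ↑((univ.filter fun q : SignedPerm m => q.inD) ×ˢ (univ : Finset (Fin (m+1) × Bool))) := by
  rintro ⟨q, j, s⟩ - ⟨q', j', s'⟩ - h
  obtain ⟨h1, h2, h3⟩ := phi_inj h
  exact Prod.ext h1 (Prod.ext h2 h3)

lemma phi_image (hm : 2 ≤ m) :
    ((univ.filter fun q : SignedPerm m => q.inD) ×ˢ (univ : Finset (Fin (m+1) × Bool))).image
      (fun x => phi x.1 x.2.1 x.2.2)
    = univ.filter fun p : SignedPerm (m+1) => p.inD := by
  apply Finset.eq_of_subset_of_card_le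
  · intro p hp
    obtain ⟨⟨q, j, s⟩, hx, rfl⟩ := Finset.mem_image.mp hp
    simp only [Finset.mem_product, mem_filter, mem_univ, true_and] at hx
    simp only [mem_filter, mem_univ, true_and]
    exact inD_phi hm q j s hx.1
  · rw [Finset.card_image_of_injOn (phi_injOn hm), Finset.card_product]
    have h1 := two_mul_cardD (m+1) (by omega)
    have h2 := two_mul_cardD m (by omega)
    have hc : (univ : Finset (Fin (m+1) × Bool)).card = 2 * (m+1) := by
      rw [Finset.card_univ, Fintype.card_prod, Fintype.card_fin, Fintype.card_bool]
      ring
    rw [hc]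
    have hfact : (m+1).factorial = (m+1) * m.factorial := Nat.factorial_succ m
    have key : 2^(m+1) * (m+1).factorial
        = 2 * ((univ.filter fun q : SignedPerm m => q.inD).card * (2*(m+1))) := by
      calc 2^(m+1) * (m+1).factorial
          = (2^m * m.factorial) * (2*(m+1)) := by rw [hfact, pow_succ]; ring
        _ = (2 * (univ.filter fun q : SignedPerm m => q.inD).card) * (2*(m+1)) := by rw [h2]
        _ = 2 * ((univ.filter fun q : SignedPerm m => q.inD).card * (2*(m+1))) := by ring
    omega

lemma sum_phi (hm : 2 ≤ m) (F : SignedPerm (m+1) → Polynomial ℚ) :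
    ∑ p ∈ univ.filter (fun p : SignedPerm (m+1) => p.inD), F p
    = ∑ q ∈ univ.filter (fun q : SignedPerm m => q.inD),
        ∑ x : Fin (m+1) × Bool, F (phi q x.1 x.2) := by
  rw [← phi_image hm, Finset.sum_image (fun x hx y hy h => phi_injOn hm hx hy h)]
  rw [Finset.sum_product]

lemma mem_ddes_phi (hm : 2 ≤ m) (q : SignedPerm m) (j : Fin (m+1)) (s : Bool) (i : ℕ)
    (hi : i ≤ m) :
    (i ∈ (phi q j s).ddes) ↔
      (if i = 0 ∧ (j:ℕ) = 1 then s = true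
       else if i < (j:ℕ) then i ∈ q.ddes
       else if i = (j:ℕ) then s = true
       else if i = (j:ℕ)+1 then s = false
       else (i-1) ∈ q.ddes) := by
  unfold phi
  cases s
  · simpa using mem_ddes_ins hm q j false i hi
  · have := mem_ddes_ins hm (negOne q) j true i hi
    rw [negOne_ddes hm] at this
    simpa using this

lemma d_phi (hm : 2 ≤ m) (q : SignedPerm m) (j : Fin (m+1)) (s : Bool)
    (hJ : (j:ℕ) ≠ 1) :
    (phi q j s).d = q.d - (if (j:ℕ) ∈ q.ddes then 1 else 0)
      + (if s then 1 else if (j:ℕ) < m then 1 else 0) := by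
  unfold phi
  cases s
  · simpa using d_ins hm q j false hJ
  · have := d_ins hm (negOne q) j true hJ
    rw [negOne_ddes hm, negOne_d hm] at this
    simpa using this


lemma one_le_d {n : ℕ} (q : SignedPerm n) (h0 : 0 ∈ q.ddes) : 1 ≤ q.d :=
  Finset.card_pos.mpr ⟨0, h0⟩

lemma d_le_of_one_notMem (hm : 2 ≤ m) (q : SignedPerm m) (h1 : 1 ∉ q.ddes) :
    q.d ≤ m - 1 := by
  unfold SignedPerm.d
  have hsub : q.ddes ⊆ (Finset.range m).erase 1 := by
    intro i hi
    exact Finset.mem_erase.mpr ⟨fun he => h1 (he ▸ hi), Finset.mem_range.mpr (mem_ddes_lt q hi)⟩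
  calc q.ddes.card ≤ ((Finset.range m).erase 1).card := Finset.card_le_card hsub
    _ = m - 1 := by rw [Finset.card_erase_of_mem (Finset.mem_range.mpr (by omega))]; simp

open Polynomial in
lemma slot_sum (hm : 2 ≤ m) (q : SignedPerm m) :
    ∑ x : Fin (m+1) × Bool,
      (if (phi q x.1 x.2).type0Ge2 then (X : Polynomial ℚ) ^ (phi q x.1 x.2).d else 0)
    = if q.type0Ge2 then
        (2 * q.d) • (X : Polynomial ℚ) ^ q.d + (2*m - 1 - 2*q.d) • (X : Polynomial ℚ) ^ (q.d + 1)
      else if q.type01 then (X : Polynomial ℚ) ^ q.d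
      else (X : Polynomial ℚ) ^ (q.d + 1) := by
  classical
  set g : ℕ → Polynomial ℚ := fun J =>
    if J = 0 then (if 0 ∈ q.ddes then X ^ q.d else X ^ (q.d+1))
    else if J = 1 then 0
    else if 0 ∈ q.ddes ∧ 1 ∉ q.ddes then
      (if J ∈ q.ddes then (2:ℕ) • (X : Polynomial ℚ) ^ q.d
       else if J < m then (2:ℕ) • (X : Polynomial ℚ) ^ (q.d+1)
       else X ^ q.d + X ^ (q.d + 1))
    else 0 with hg
  have key : ∀ j : Fin (m+1),
      (if (phi q j true).type0Ge2 then (X : Polynomial ℚ) ^ (phi q j true).d else 0)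
      + (if (phi q j false).type0Ge2 then (X : Polynomial ℚ) ^ (phi q j false).d else 0)
      = g (j:ℕ) := by
    intro j
    have hJm : (j:ℕ) ≤ m := Nat.lt_succ_iff.mp j.isLt
    have m0t := mem_ddes_phi hm q j true 0 (by omega)
    have m0f := mem_ddes_phi hm q j false 0 (by omega)
    have m1t := mem_ddes_phi hm q j true 1 (by omega)
    have m1f := mem_ddes_phi hm q j false 1 (by omega)
    rcases Nat.lt_or_ge (j:ℕ) 2 with hJ2 | hJ2
    · rcases Nat.lt_or_ge (j:ℕ) 1 with hJ1 | hJ1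
      · -- J = 0
        have hJ0 : (j:ℕ) = 0 := by omega
        rw [if_neg (by omega), if_neg (by omega), if_pos hJ0.symm] at m0t m0f
        rw [if_neg (by omega), if_neg (by omega), if_neg (by omega),
          if_pos (by omega)] at m1t m1f
        have ht : (phi q j true).type0Ge2 := by
          constructor
          · exact m0t.mpr rfl
          · intro hmem
            exact absurd (m1t.mp hmem) (by simp)
        have hf : ¬ (phi q j false).type0Ge2 := by
          intro hc
          exact absurd (m0f.mp hc.1) (by simp)
        rw [if_pos ht, if_neg hf, add_zero]
        have hd := d_phi hm q j true (by omega)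
        rw [hg]
        simp only [hJ0, if_pos rfl]
        by_cases h0 : 0 ∈ q.ddes
        · rw [if_pos h0]
          rw [hd, hJ0, if_pos h0, if_pos rfl]
          have := one_le_d q h0
          congr 1
          omega
        · rw [if_neg h0]
          rw [hd, hJ0, if_neg h0, if_pos rfl]
          norm_num
      · -- J = 1
        have hJ1' : (j:ℕ) = 1 := by omega
        rw [if_neg (by omega), if_neg (by omega), if_pos hJ1'.symm] at m1t
        rw [if_pos (by exact ⟨rfl, hJ1'⟩)] at m0f
        have ht : ¬ (phi q j true).type0Ge2 := by
          intro hc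
          exact hc.2 (m1t.mpr rfl)
        have hf : ¬ (phi q j false).type0Ge2 := by
          intro hc
          exact absurd (m0f.mp hc.1) (by simp)
        rw [if_neg ht, if_neg hf, add_zero, hg]
        simp only [hJ1', if_neg (by omega : ¬ (1:ℕ) = 0), if_pos rfl]
        simp
    · -- J ≥ 2
      rw [if_neg (by omega), if_pos (by omega)] at m0t m0f
      rw [if_neg (by omega), if_pos (by omega)] at m1t m1f
      have htype : ∀ s : Bool, ((phi q j s).type0Ge2 ↔ (0 ∈ q.ddes ∧ 1 ∉ q.ddes)) := by
        intro s
        cases s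
        · exact and_congr m0f (not_congr m1f)
        · exact and_congr m0t (not_congr m1t)
      rw [hg]
      simp only [if_neg (by omega : ¬ (j:ℕ) = 0), if_neg (by omega : ¬ (j:ℕ) = 1)]
      by_cases hq : 0 ∈ q.ddes ∧ 1 ∉ q.ddes
      · rw [if_pos hq, if_pos ((htype true).mpr hq), if_pos ((htype false).mpr hq)]
        have hdt := d_phi hm q j true (by omega)
        have hdf := d_phi hm q j false (by omega)
        by_cases hJW : (j:ℕ) ∈ q.ddes
        · have hd1 : 1 ≤ q.d := one_le_d q hq.1
          rw [if_pos hJW]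
          rw [hdt, hdf, if_pos hJW]
          simp only [if_true, Bool.false_eq_true, if_false]
          rw [if_pos (mem_ddes_lt q hJW), show q.d - 1 + 1 = q.d by omega, two_smul]
        · rw [if_neg hJW]
          rw [hdt, hdf, if_neg hJW, Nat.sub_zero]
          simp only [if_true, Bool.false_eq_true, if_false]
          by_cases hJm' : (j:ℕ) < m
          · rw [if_pos hJm', if_pos hJm', two_smul]
          · rw [if_neg hJm', if_neg hJm', Nat.add_zero]
            exact add_comm _ _
      · rw [if_neg hq, if_neg (fun hc => hq ((htype true).mp hc)),
          if_neg (fun hc => hq ((htype false).mp hc)), add_zero]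
  have hsum : ∑ x : Fin (m+1) × Bool,
      (if (phi q x.1 x.2).type0Ge2 then (X : Polynomial ℚ) ^ (phi q x.1 x.2).d else 0)
      = ∑ J ∈ Finset.range (m+1), g J := by
    rw [Fintype.sum_prod_type]
    rw [← Fin.sum_univ_eq_sum_range]
    apply Finset.sum_congr rfl
    intro j _
    rw [← key j]
    rw [Fintype.sum_bool]
  rw [hsum]
  have hsplit : ∑ J ∈ Finset.range (m+1), g J
      = g 0 + g 1 + ∑ J ∈ Finset.Ico 2 (m+1), g J := by
    rw [Finset.range_eq_Ico, ← Finset.sum_Ico_consecutive g (by omega : (0:ℕ) ≤ 2) (by omega : 2 ≤ m+1)]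
    congr 1
    rw [← Finset.range_eq_Ico]
    rw [Finset.sum_range_succ, Finset.sum_range_one]
  rw [hsplit]
  by_cases hq : 0 ∈ q.ddes ∧ 1 ∉ q.ddes
  · -- q of type 0,≥2
    have hd1 : 1 ≤ q.d := one_le_d q hq.1
    have hd2 : q.d ≤ m - 1 := d_le_of_one_notMem hm q hq.2
    have hg0 : g 0 = X ^ q.d := by rw [hg]; simp [hq.1]
    have hg1 : g 1 = 0 := by rw [hg]; norm_num
    have hIco : ∑ J ∈ Finset.Ico 2 (m+1), g J
        = (∑ J ∈ Finset.Ico 2 m, g J) + g m := by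
      rw [← Finset.sum_Ico_consecutive g (by omega : 2 ≤ m) (by omega : m ≤ m+1)]
      congr 1
      rw [Nat.Ico_succ_singleton, Finset.sum_singleton]
    have hgm : g m = X ^ q.d + X ^ (q.d + 1) := by
      rw [hg]
      have hmW : m ∉ q.ddes := fun hc => absurd (mem_ddes_lt q hc) (by omega)
      simp only [if_neg (by omega : ¬ m = 0), if_neg (by omega : ¬ m = 1), if_pos hq,
        if_neg hmW, if_neg (by omega : ¬ m < m)]
    have hmain : ∑ J ∈ Finset.Ico 2 m, g J
        = (q.d - 1) • ((2:ℕ) • (X : Polynomial ℚ) ^ q.d)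
          + ((m - 2) - (q.d - 1)) • ((2:ℕ) • (X : Polynomial ℚ) ^ (q.d+1)) := by
      have hcg : ∀ J ∈ Finset.Ico 2 m, g J
          = if J ∈ q.ddes then (2:ℕ) • (X : Polynomial ℚ) ^ q.d
            else (2:ℕ) • (X : Polynomial ℚ) ^ (q.d+1) := by
        intro J hJ
        rw [Finset.mem_Ico] at hJ
        rw [hg]
        simp only [if_neg (by omega : ¬ J = 0), if_neg (by omega : ¬ J = 1), if_pos hq]
        by_cases hJW : J ∈ q.ddes
        · rw [if_pos hJW, if_pos hJW]
        · rw [if_neg hJW, if_neg hJW, if_pos (by omega)]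
      rw [Finset.sum_congr rfl hcg, Finset.sum_ite _ _]
      rw [Finset.sum_const, Finset.sum_const]
      congr 2
      · -- card of filter mem
        have : (Finset.Ico 2 m).filter (fun J => J ∈ q.ddes) = q.ddes.erase 0 := by
          ext a
          simp only [Finset.mem_filter, Finset.mem_Ico, Finset.mem_erase]
          constructor
          · rintro ⟨⟨h2, hlt⟩, hW⟩
            exact ⟨by omega, hW⟩
          · rintro ⟨h0, hW⟩
            have := mem_ddes_lt q hW
            have ha1 : a ≠ 1 := fun he => hq.2 (he ▸ hW)
            exact ⟨⟨by omega, this⟩, hW⟩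
        rw [this, Finset.card_erase_of_mem hq.1]
        rfl
      · have hcc := Finset.card_filter_add_card_filter_not
          (s := Finset.Ico 2 m) (fun J => J ∈ q.ddes)
        have hIcoCard : (Finset.Ico 2 m).card = m - 2 := Nat.card_Ico 2 m
        have : (Finset.Ico 2 m).filter (fun J => J ∈ q.ddes) = q.ddes.erase 0 := by
          ext a
          simp only [Finset.mem_filter, Finset.mem_Ico, Finset.mem_erase]
          constructor
          · rintro ⟨⟨h2, hlt⟩, hW⟩
            exact ⟨by omega, hW⟩
          · rintro ⟨h0, hW⟩
            have := mem_ddes_lt q hW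
            have ha1 : a ≠ 1 := fun he => hq.2 (he ▸ hW)
            exact ⟨⟨by omega, this⟩, hW⟩
        rw [this, Finset.card_erase_of_mem hq.1] at hcc
        have : q.ddes.card = q.d := rfl
        omega
    have htq : q.type0Ge2 := hq
    rw [if_pos htq, hg0, hg1, hIco, hgm, hmain]
    obtain ⟨a, ha⟩ : ∃ a, q.d = a + 1 := ⟨q.d - 1, by omega⟩
    obtain ⟨b, hb⟩ : ∃ b, m = a + b + 2 := ⟨m - a - 2, by omega⟩
    rw [ha, hb]
    rw [show a + 1 - 1 = a by omega]
    rw [show a + b + 2 - 2 - a = b by omega]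
    rw [show 2 * (a + b + 2) - 1 - 2 * (a+1) = 2*b + 1 by omega]
    simp only [nsmul_eq_mul]
    push_cast
    ring
  · -- q not of type 0,≥2
    have hg1 : g 1 = 0 := by rw [hg]; norm_num
    have hIco0 : ∑ J ∈ Finset.Ico 2 (m+1), g J = 0 := by
      apply Finset.sum_eq_zero
      intro J hJ
      rw [Finset.mem_Ico] at hJ
      rw [hg]
      simp only [if_neg (by omega : ¬ J = 0), if_neg (by omega : ¬ J = 1), if_neg hq]
    have htq : ¬ q.type0Ge2 := hq
    rw [if_neg htq, hg1, hIco0, add_zero, add_zero, hg]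
    simp only [if_pos rfl]
    by_cases h0 : 0 ∈ q.ddes
    · have h1 : 1 ∈ q.ddes := by
        by_contra h1
        exact hq ⟨h0, h1⟩
      have ht01 : q.type01 := ⟨h0, h1⟩
      simp [h0, ht01]
    · have ht01 : ¬ q.type01 := fun hc => h0 hc.1
      simp [h0, ht01]


lemma sum_and_filter {α : Type*} [Fintype α] [DecidableEq α] (P Q : α → Prop)
    [DecidablePred P] [DecidablePred Q] (f : α → Polynomial ℚ) :
    ∑ q ∈ univ.filter (fun q => P q ∧ Q q), f q
    = ∑ q ∈ univ.filter (fun q => P q), (if Q q then f q else 0) := by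
  rw [← Finset.sum_filter, Finset.filter_filter]

end SubEuler

open Polynomial in
/-- **Proposition 3.3 (iv).** Difference-differential equation for `D_n^{0,≥2}(t)`. -/
theorem polyD0Ge2_recurrence (n : ℕ) (hn : 3 ≤ n) :
    polyD0Ge2 n = C (2 * (n : ℚ) - 3) * X * polyD0Ge2 (n - 1)
      + 2 * X * (1 - X) * derivative (polyD0Ge2 (n - 1))
      + X * polyD1 (n - 1) + polyD01 (n - 1) + X * polyDGe2 (n - 1) := by
  classical
  open SubEuler Finset in
  obtain ⟨m, rfl⟩ : ∃ m, n = m + 1 := ⟨n - 1, by omega⟩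
  have hm : 2 ≤ m := by omega
  simp only [Nat.add_sub_cancel]
  have hdecomp : ∀ q : SignedPerm m,
      (if q.type0Ge2 then
        (2 * q.d) • (X : Polynomial ℚ) ^ q.d + (2*m - 1 - 2*q.d) • (X : Polynomial ℚ) ^ (q.d + 1)
      else if q.type01 then (X : Polynomial ℚ) ^ q.d
      else (X : Polynomial ℚ) ^ (q.d + 1))
      = (if q.type0Ge2 then
          (2 * q.d) • (X : Polynomial ℚ) ^ q.d + (2*m - 1 - 2*q.d) • (X : Polynomial ℚ) ^ (q.d + 1) else 0)
        + (if q.type01 then (X : Polynomial ℚ) ^ q.d else 0)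
        + (if q.type1 then (X : Polynomial ℚ) ^ (q.d + 1) else 0)
        + (if q.typeGe2 then (X : Polynomial ℚ) ^ (q.d + 1) else 0) := by
    intro q
    by_cases h0 : 0 ∈ q.ddes <;> by_cases h1 : 1 ∈ q.ddes <;>
      simp [SignedPerm.type0Ge2, SignedPerm.type01, SignedPerm.type1, SignedPerm.typeGe2, h0, h1]
  have L1 : polyD0Ge2 (m+1)
      = ∑ p ∈ univ.filter (fun p : SignedPerm (m+1) => p.inD),
          (if p.type0Ge2 then (X : Polynomial ℚ)^p.d else 0) := by
    unfold polyD0Ge2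
    rw [sum_and_filter]
  rw [L1, sum_phi hm, Finset.sum_congr rfl (fun q _ => slot_sum hm q),
    Finset.sum_congr rfl (fun q _ => hdecomp q),
    Finset.sum_add_distrib, Finset.sum_add_distrib, Finset.sum_add_distrib]
  have E01 : ∑ q ∈ univ.filter (fun q : SignedPerm m => q.inD),
      (if q.type01 then (X : Polynomial ℚ) ^ q.d else 0) = polyD01 m := by
    unfold polyD01
    rw [sum_and_filter]
  have E1 : ∑ q ∈ univ.filter (fun q : SignedPerm m => q.inD),
      (if q.type1 then (X : Polynomial ℚ) ^ (q.d + 1) else 0) = X * polyD1 m := by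
    unfold polyD1
    rw [Finset.mul_sum, ← sum_and_filter (fun q : SignedPerm m => q.inD)]
    apply Finset.sum_congr rfl
    intro q _
    rw [pow_succ, mul_comm]
  have EG : ∑ q ∈ univ.filter (fun q : SignedPerm m => q.inD),
      (if q.typeGe2 then (X : Polynomial ℚ) ^ (q.d + 1) else 0) = X * polyDGe2 m := by
    unfold polyDGe2
    rw [Finset.mul_sum, ← sum_and_filter (fun q : SignedPerm m => q.inD)]
    apply Finset.sum_congr rfl
    intro q _
    rw [pow_succ, mul_comm]
  have E0 : ∑ q ∈ univ.filter (fun q : SignedPerm m => q.inD),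
      (if q.type0Ge2 then
        (2 * q.d) • (X : Polynomial ℚ) ^ q.d + (2*m - 1 - 2*q.d) • (X : Polynomial ℚ) ^ (q.d + 1)
      else 0)
      = C (2 * ((m+1 : ℕ) : ℚ) - 3) * X * polyD0Ge2 m
        + 2 * X * (1 - X) * derivative (polyD0Ge2 m) := by
    unfold polyD0Ge2
    rw [derivative_sum, Finset.mul_sum, Finset.mul_sum, ← Finset.sum_add_distrib,
      ← sum_and_filter (fun q : SignedPerm m => q.inD)]
    apply Finset.sum_congr rfl
    intro q hq
    rw [Finset.mem_filter] at hq
    have htq : q.type0Ge2 := hq.2.2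
    have hd1 : 1 ≤ q.d := one_le_d q htq.1
    have hd2 : q.d ≤ m - 1 := d_le_of_one_notMem hm q htq.2
    obtain ⟨a, ha⟩ : ∃ a, q.d = a + 1 := ⟨q.d - 1, by omega⟩
    obtain ⟨b, hb⟩ : ∃ b, m = a + b + 2 := ⟨m - a - 2, by omega⟩
    rw [Polynomial.derivative_X_pow, ha, hb]
    rw [show a + 1 - 1 = a by omega]
    rw [show 2 * (a + b + 2) - 1 - 2 * (a+1) = 2*b + 1 by omega]
    simp only [nsmul_eq_mul, map_add, map_sub, map_mul, map_one, map_natCast, map_ofNat]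
    push_cast
    ring
  rw [E01, E1, EG, E0]
  ring
end
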